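/- arXiv:1501.06781 — 5 statements merged into one kernel-verified Lean document; each statement's English description precedes it below -/
import Mathlib

section
/- Fix a blocklength n, a joint type P_UX with denominator n on U×X, an arbitrary sequence y ∈ Yⁿ, and t ∈ ℝ. Let the pair (U, X) be drawn uniformly at random from the set of pairs (u, x) ∈ Uⁿ × Xⁿ whose joint type is P_UX. Then Pr[Î((U,X) ∧ y) ≥ t] ≤ (n+1)^c · exp(−n·t), for a constant c depending only on |U|, |X|, |Y|. -/
open scoped BigOperators ENNReal

noncomputable section

/-- Indicator of a proposition. -/
def ind (p : Prop) : ℝ := @ite _ p (Classical.propDecidable p) 1 0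

/-- `P` is a probability distribution on the finite set `A`. -/
def IsDist {A : Type*} [Fintype A] (P : A → ℝ) : Prop :=
  (∀ a, 0 ≤ P a) ∧ ∑ a, P a = 1

/-- `V` is a channel from `A` to `B`. -/
def IsChannel {A B : Type*} [Fintype B] (V : A → B → ℝ) : Prop :=
  (∀ a b, 0 ≤ V a b) ∧ ∀ a, ∑ b, V a b = 1

/-- Empirical distribution (type) of a sequence. -/
def empDist {A : Type*} [Fintype A] [DecidableEq A] {n : ℕ} (x : Fin n → A) : A → ℝ :=
  fun a => ((Finset.univ.filter (fun i => x i = a)).card : ℝ) / n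

/-- `P` is a (joint) type with denominator `n`. -/
def IsTypeDen (n : ℕ) {A : Type*} (P : A → ℝ) : Prop :=
  ∀ a, ∃ k : ℕ, P a = (k : ℝ) / n

/-- Mutual information of a joint distribution `Q` on `A × B`. -/
def mutInf {A B : Type*} [Fintype A] [Fintype B] (Q : A × B → ℝ) : ℝ :=
  ∑ p : A × B, Q p * Real.log (Q p / ((∑ b, Q (p.1, b)) * (∑ a, Q (a, p.2))))

/-- Empirical mutual information of a pair of sequences. -/
def empMI {A B : Type*} [Fintype A] [Fintype B] [DecidableEq A] [DecidableEq B] {n : ℕ}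
    (x : Fin n → A) (y : Fin n → B) : ℝ :=
  mutInf (empDist (fun i => (x i, y i)))

/-- Conditional relative entropy `D(V‖W|P)`, with the conventions `0·log(0/q) = 0` and
`p·log(p/0) = +∞` for `p > 0`. -/
def condKL {A B : Type*} [Fintype A] [Fintype B] (P : A → ℝ) (V W : A → B → ℝ) : EReal :=
  ∑ a, ∑ b,
    if P a * V a b = 0 then (0 : EReal)
    else if W a b = 0 then ⊤
    else ((P a * V a b * Real.log (V a b / W a b) : ℝ) : EReal)

/-- Mutual information between the input (with distribution `P`) and output of channel `V`. -/
def chMI {A B : Type*} [Fintype A] [Fintype B] (P : A → ℝ) (V : A → B → ℝ) : ℝ :=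
  mutInf (fun p : A × B => P p.1 * V p.1 p.2)

/-- `I_V(U ∧ Y)` when `(U,X,Y) ~ P × V`. -/
def IUY {U X Y : Type*} [Fintype U] [Fintype X] [Fintype Y]
    (P : U × X → ℝ) (V : U × X → Y → ℝ) : ℝ :=
  mutInf (fun p : U × Y => ∑ x, P (p.1, x) * V (p.1, x) p.2)

/-- The broadcast channel `W(y|u,x) := W_Y(y|x)` viewed as a channel from `U × X`. -/
def Wuxy {U X Y : Type*} (W_Y : X → Y → ℝ) : U × X → Y → ℝ := fun p y => W_Y p.2 y

/-- `U`-marginal of `P`. -/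
def PU {U X : Type*} [Fintype X] (P : U × X → ℝ) : U → ℝ := fun u => ∑ x, P (u, x)

/-- Induced channel `W_{Y|U}(y|u) = ∑ x, P_{X|U}(x|u) W_Y(y|x)`. -/
def WYU {U X Y : Type*} [Fintype X] (P : U × X → ℝ) (W_Y : X → Y → ℝ) : U → Y → ℝ :=
  fun u y => ∑ x, P (u, x) / PU P u * W_Y x y

/-- Joint modified random coding error exponent `E_{r,λ}(R1, R2)`. -/
def Ejoint {U X Y : Type*} [Fintype U] [Fintype X] [Fintype Y]
    (P : U × X → ℝ) (W_Y : X → Y → ℝ) (lam R1 R2 : ℝ) : EReal :=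
  ⨅ V : {V : U × X → Y → ℝ // IsChannel V},
    condKL P V.1 (Wuxy W_Y) + ((lam * max (chMI P V.1 - (R1 + R2)) 0 : ℝ) : EReal)

/-- Penalized modified random coding error exponent `E⁻_{r,λ}(R1, R2, ρ)`. -/
def Epen {U X Y : Type*} [Fintype U] [Fintype X] [Fintype Y]
    (P : U × X → ℝ) (W_Y : X → Y → ℝ) (lam R1 R2 rho : ℝ) : EReal :=
  ⨅ V : {V : U × X → Y → ℝ // IsChannel V},
    condKL P V.1 (Wuxy W_Y)
      + ((lam * max (chMI P V.1 - (R1 + R2)) 0 - max (IUY P V.1 - rho) 0 : ℝ) : EReal)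

/-- Marginal modified random coding error exponent `E_{r,λ}(R2)`. -/
def Emarg {U X Y : Type*} [Fintype U] [Fintype X] [Fintype Y]
    (P : U × X → ℝ) (W_Y : X → Y → ℝ) (lam R2 : ℝ) : EReal :=
  ⨅ Vh : {Vh : U → Y → ℝ // IsChannel Vh},
    condKL (PU P) Vh.1 (WYU P W_Y) + ((lam * max (chMI (PU P) Vh.1 - R2) 0 : ℝ) : EReal)

/-- Sphere packing exponent `E_sp(R)`. -/
def Esp {U X Y : Type*} [Fintype U] [Fintype X] [Fintype Y]
    (P : U × X → ℝ) (W_Y : X → Y → ℝ) (R : ℝ) : EReal :=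
  ⨅ V : {V : U × X → Y → ℝ // IsChannel V ∧ chMI P V ≤ R}, condKL P V.1 (Wuxy W_Y)

/-- Number of messages `⌈2^{nR}⌉`. -/
def Mct (n : ℕ) (R : ℝ) : ℕ := ⌈(2 : ℝ) ^ ((n : ℝ) * R)⌉₊

instance (n : ℕ) (R : ℝ) : NeZero (Mct n R) :=
  ⟨(Nat.ceil_pos.mpr (Real.rpow_pos_of_pos two_pos _)).ne'⟩

/-- Cardinality of the type class `T_P ⊆ Aⁿ`. -/
def typeCCard {A : Type*} [Fintype A] [DecidableEq A] (n : ℕ) (P : A → ℝ) : ℕ :=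
  Nat.card {x : Fin n → A // empDist x = P}

/-- Uniform distribution on the type class `T_P ⊆ Aⁿ`. -/
def unifType {A : Type*} [Fintype A] [DecidableEq A] (n : ℕ) (P : A → ℝ) (x : Fin n → A) : ℝ :=
  if empDist x = P then (typeCCard n P : ℝ)⁻¹ else 0

/-- Cardinality of the shell `T_{P_{X|U}}(u)`. -/
def shellCard {U X : Type*} [Fintype U] [Fintype X] [DecidableEq U] [DecidableEq X]
    (n : ℕ) (P : U × X → ℝ) (u : Fin n → U) : ℕ :=
  Nat.card {x : Fin n → X // empDist (fun i => (u i, x i)) = P}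

/-- Uniform distribution on the shell `T_{P_{X|U}}(u)`. -/
def unifShell {U X : Type*} [Fintype U] [Fintype X] [DecidableEq U] [DecidableEq X]
    (n : ℕ) (P : U × X → ℝ) (u : Fin n → U) (x : Fin n → X) : ℝ :=
  if empDist (fun i => (u i, x i)) = P then (shellCard n P u : ℝ)⁻¹ else 0

/-- Product channel `W_Y^n(y|x)`. -/
def Wn {X Y : Type*} {n : ℕ} (W_Y : X → Y → ℝ) (x : Fin n → X) (y : Fin n → Y) : ℝ :=
  ∏ i, W_Y (x i) (y i)

/-- Probability, over the random superposition codebook and the channel output generated by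
the transmitted codeword `X(1,1)`, of an event `E` depending on the codebook and the output. -/
def probEvt {U X Y : Type*} [Fintype U] [Fintype X] [Fintype Y]
    [DecidableEq U] [DecidableEq X] [DecidableEq Y]
    (n : ℕ) (R1 R2 : ℝ) (P : U × X → ℝ) (W_Y : X → Y → ℝ)
    (E : (Fin (Mct n R2) → Fin n → U) → (Fin (Mct n R1) × Fin (Mct n R2) → Fin n → X) →
      (Fin n → Y) → Prop) : ℝ :=
  ∑ Uc : Fin (Mct n R2) → Fin n → U,
    ∑ Xc : Fin (Mct n R1) × Fin (Mct n R2) → Fin n → X,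
      ∑ y : Fin n → Y,
        ((∏ m2, unifType n (PU P) (Uc m2)) * ∏ p, unifShell n P (Uc p.2) (Xc p))
          * Wn W_Y (Xc (0, 0)) y * ind (E Uc Xc y)

end


lemma aux_pow_succ_le (n : ℕ) : ((n:ℝ)+1)^n ≤ (n:ℝ)^n * Real.exp 1 := by
  rcases Nat.eq_zero_or_pos n with h | h
  · subst h; simp [Real.one_le_exp_iff]
  · have hn : (0:ℝ) < n := by exact_mod_cast h
    have h1 : ((n:ℝ)+1) ≤ (n:ℝ) * Real.exp (1/n) := by
      have := Real.add_one_le_exp (1/(n:ℝ))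
      calc ((n:ℝ)+1) = (n:ℝ) * (1/(n:ℝ) + 1) := by field_simp; ring
        _ ≤ (n:ℝ) * Real.exp (1/n) := by nlinarith [Real.add_one_le_exp (1/(n:ℝ))]
    calc ((n:ℝ)+1)^n ≤ ((n:ℝ) * Real.exp (1/n))^n := by
          apply pow_le_pow_left₀ (by positivity) h1
      _ = (n:ℝ)^n * Real.exp (1/n) ^ n := mul_pow _ _ _
      _ = (n:ℝ)^n * Real.exp 1 := by
          rw [← Real.exp_nat_mul]
          congr 1
          field_simp
lemma aux_pow_self_le_factorial (n : ℕ) : (n:ℝ)^n ≤ (n.factorial : ℝ) * Real.exp n := by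
  induction n with
  | zero => simp
  | succ n ih =>
    have h2 : ((n:ℝ)+1)^(n+1) = ((n:ℝ)+1) * ((n:ℝ)+1)^n := by ring
    have h3 : (0:ℝ) ≤ (n:ℝ)+1 := by positivity
    calc ((n+1:ℕ):ℝ)^(n+1) = ((n:ℝ)+1) * ((n:ℝ)+1)^n := by push_cast; ring
      _ ≤ ((n:ℝ)+1) * ((n:ℝ)^n * Real.exp 1) := by
          apply mul_le_mul_of_nonneg_left (aux_pow_succ_le n) h3
      _ ≤ ((n:ℝ)+1) * (((n.factorial : ℝ)) * Real.exp n * Real.exp 1) := by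
          have := Real.exp_pos (1:ℝ)
          apply mul_le_mul_of_nonneg_left _ h3
          apply mul_le_mul_of_nonneg_right ih this.le
      _ = ((n+1).factorial : ℝ) * Real.exp ((n:ℝ)+1) := by
          rw [Nat.factorial_succ, Real.exp_add]
          push_cast; ring
      _ = ((n+1).factorial : ℝ) * Real.exp ((n+1:ℕ):ℝ) := by push_cast; ring

lemma aux_exp_le_pow_succ (m : ℕ) (hm : 1 ≤ m) :
    Real.exp 1 * (m:ℝ)^(m+1) ≤ ((m:ℝ)+1)^(m+1) := by
  have hm' : (0:ℝ) < m := by exact_mod_cast hm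
  set x : ℝ := 1/((m:ℝ)+1) with hx
  have h1 : Real.exp x ≤ ((m:ℝ)+1)/m := by
    have h2 := Real.add_one_le_exp (-x)
    have h5 : Real.exp x * (1 - x) ≤ 1 := by
      have h4 : -x + 1 = 1 - x := by ring
      rw [h4] at h2
      calc Real.exp x * (1 - x) ≤ Real.exp x * Real.exp (-x) :=
            mul_le_mul_of_nonneg_left h2 (Real.exp_pos _).le
        _ = 1 := by rw [← Real.exp_add]; simp
    have h6 : 1 - x = (m:ℝ)/((m:ℝ)+1) := by rw [hx]; field_simp; ring
    rw [h6] at h5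
    rw [le_div_iff₀ hm']
    have h5' := mul_le_mul_of_nonneg_right h5 (show (0:ℝ) ≤ (m:ℝ)+1 by positivity)
    rw [one_mul] at h5'
    calc Real.exp x * (m:ℝ)
        = Real.exp x * ((m:ℝ)/((m:ℝ)+1)) * ((m:ℝ)+1) := by field_simp
      _ ≤ (m:ℝ)+1 := h5'
  have h7 : Real.exp 1 ≤ (((m:ℝ)+1)/m)^(m+1) := by
    have h8 := pow_le_pow_left₀ (Real.exp_pos _).le h1 (m+1)
    rw [← Real.exp_nat_mul] at h8
    have h9 : ((m+1:ℕ):ℝ) * x = 1 := by rw [hx]; push_cast; field_simp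
    rwa [h9] at h8
  calc Real.exp 1 * (m:ℝ)^(m+1)
      ≤ (((m:ℝ)+1)/m)^(m+1) * (m:ℝ)^(m+1) := mul_le_mul_of_nonneg_right h7 (by positivity)
    _ = ((m:ℝ)+1)^(m+1) := by
        rw [div_pow, div_mul_cancel₀]
        positivity

lemma aux_factorial_exp_le (m : ℕ) (hm : 1 ≤ m) :
    (m.factorial : ℝ) * Real.exp m ≤ Real.exp 1 * m * (m:ℝ)^m := by
  induction m, hm using Nat.le_induction with
  | base => norm_num
  | succ m hm ih =>
    have hm' : (0:ℝ) < m := by exact_mod_cast hm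
    have key := aux_exp_le_pow_succ m hm
    calc ((m+1).factorial : ℝ) * Real.exp ((m+1:ℕ):ℝ)
        = ((m:ℝ)+1) * Real.exp 1 * ((m.factorial : ℝ) * Real.exp m) := by
          rw [Nat.factorial_succ]; push_cast; rw [Real.exp_add]; ring
      _ ≤ ((m:ℝ)+1) * Real.exp 1 * (Real.exp 1 * m * (m:ℝ)^m) := by
          apply mul_le_mul_of_nonneg_left ih (by positivity)
      _ = Real.exp 1 * ((m:ℝ)+1) * (Real.exp 1 * (m:ℝ)^(m+1)) := by ring
      _ ≤ Real.exp 1 * ((m:ℝ)+1) * ((m:ℝ)+1)^(m+1) := by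
          apply mul_le_mul_of_nonneg_left key (by positivity)
      _ = Real.exp 1 * ((m+1:ℕ):ℝ) * ((m+1:ℕ):ℝ)^(m+1) := by push_cast; ring

lemma aux_factor_bound (n m : ℕ) (hmn : m ≤ n) :
    (m.factorial : ℝ) * Real.exp m ≤ ((n:ℝ)+1)^2 * (m:ℝ)^m := by
  rcases Nat.eq_zero_or_pos m with h | h
  · subst h
    simp only [Nat.factorial_zero, Nat.cast_one, Nat.cast_zero, Real.exp_zero,
      pow_zero, mul_one, one_mul]
    nlinarith [Nat.cast_nonneg (α := ℝ) n]
  · have h1 := aux_factorial_exp_le m h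
    have he : Real.exp 1 ≤ 3 := by
      have := Real.exp_one_lt_d9; linarith
    have hm' : (0:ℝ) ≤ m := by positivity
    have hmn' : (m:ℝ) ≤ n := by exact_mod_cast hmn
    have h2 : Real.exp 1 * m ≤ ((n:ℝ)+1)^2 := by nlinarith [Real.exp_pos (1:ℝ), mul_le_mul_of_nonneg_right he hm', sq_nonneg ((n:ℝ)-1)]
    calc (m.factorial : ℝ) * Real.exp m ≤ Real.exp 1 * m * (m:ℝ)^m := h1
      _ ≤ ((n:ℝ)+1)^2 * (m:ℝ)^m := mul_le_mul_of_nonneg_right h2 (by positivity)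

open Finset in
lemma aux_count_comp {n : ℕ} {A : Type*} [Fintype A] [DecidableEq A]
    (w0 : Fin n → A) (σ : Equiv.Perm (Fin n)) (a : A) :
    (univ.filter (fun i => w0 (σ i) = a)).card
      = (univ.filter (fun i => w0 i = a)).card := by
  apply Finset.card_bij (fun i _ => σ i)
  · intro i hi
    simp only [mem_filter, mem_univ, true_and] at hi ⊢
    exact hi
  · intro i _ j _ h
    exact σ.injective h
  · intro j hj
    simp only [mem_filter, mem_univ, true_and] at hj
    exact ⟨σ.symm j, by simp [hj], by simp⟩

open Finset in
lemma aux_fiber_card_le {n : ℕ} {A : Type*} [Fintype A] [DecidableEq A]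
    (w0 w : Fin n → A)
    (hcnt : ∀ a, (univ.filter (fun i => w i = a)).card
      = (univ.filter (fun i => w0 i = a)).card) :
    (univ.filter (fun σ : Equiv.Perm (Fin n) => w0 ∘ σ = w)).card
      ≤ ∏ a, ((univ.filter (fun i => w0 i = a)).card).factorial := by
  classical
  rw [← Fintype.card_subtype]
  have key : Fintype.card {σ : Equiv.Perm (Fin n) // w0 ∘ σ = w}
      ≤ Fintype.card (∀ a : A, {i // w i = a} ↪ {i // w0 i = a}) := by
    apply Fintype.card_le_of_injective
      (fun σp => fun a =>
        ⟨fun ip => ⟨σp.1 ip.1, by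
            have h := congrFun σp.2 ip.1
            simp only [Function.comp_apply] at h
            rw [h, ip.2]⟩,
         fun i j h => Subtype.ext (σp.1.injective (congrArg Subtype.val h))⟩)
    intro σ τ h
    apply Subtype.ext
    apply Equiv.ext
    intro i
    have h2 := congrFun h (w i)
    have h3 := congrArg (fun e => (e ⟨i, rfl⟩ : {j // w0 j = w i}).1) h2
    exact h3
  calc Fintype.card {σ : Equiv.Perm (Fin n) // w0 ∘ σ = w}
      ≤ Fintype.card (∀ a : A, {i // w i = a} ↪ {i // w0 i = a}) := key
    _ = ∏ a, Fintype.card ({i // w i = a} ↪ {i // w0 i = a}) := Fintype.card_pi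
    _ = ∏ a, ((univ.filter (fun i => w0 i = a)).card).factorial := by
        apply Finset.prod_congr rfl
        intro a _
        rw [Fintype.card_embedding_eq, Fintype.card_subtype, Fintype.card_subtype, hcnt a,
          Nat.descFactorial_self]

open Finset in
lemma aux_card_typeclass {n : ℕ} {A : Type*} [Fintype A] [DecidableEq A] (hn : 0 < n)
    (P : A → ℝ) (w0 : Fin n → A) (h0 : empDist w0 = P) :
    n.factorial ≤ (univ.filter (fun w : Fin n → A => empDist w = P)).card
      * ∏ a, ((univ.filter (fun i => w0 i = a)).card).factorial := by
  classical
  have hcnteq : ∀ w : Fin n → A, empDist w = P →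
      ∀ a, (univ.filter (fun i => w i = a)).card
        = (univ.filter (fun i => w0 i = a)).card := by
    intro w hw a
    have h1 : ((univ.filter (fun i => w i = a)).card : ℝ)/n
        = ((univ.filter (fun i => w0 i = a)).card : ℝ)/n := by
      have := congrFun hw a
      have h2 := congrFun h0 a
      unfold empDist at this h2
      rw [this, h2]
    have hn' : (n:ℝ) ≠ 0 := by positivity
    field_simp at h1
    exact_mod_cast h1
  have hmaps : ∀ σ : Equiv.Perm (Fin n), empDist (w0 ∘ σ) = P := by
    intro σ
    funext a
    unfold empDist
    rw [show (univ.filter (fun i => (w0 ∘ σ) i = a)).card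
        = (univ.filter (fun i => w0 i = a)).card from aux_count_comp w0 σ a]
    exact congrFun h0 a
  have h1 : (univ : Finset (Equiv.Perm (Fin n))).card
      = ∑ w ∈ univ.filter (fun w : Fin n → A => empDist w = P),
          (univ.filter (fun σ : Equiv.Perm (Fin n) => w0 ∘ σ = w)).card := by
    apply Finset.card_eq_sum_card_fiberwise
      (f := fun σ : Equiv.Perm (Fin n) => (w0 ∘ σ : Fin n → A))
    intro σ _
    exact mem_filter.2 ⟨mem_univ _, hmaps σ⟩
  have h2 : (univ : Finset (Equiv.Perm (Fin n))).card = n.factorial := by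
    rw [Finset.card_univ, Fintype.card_perm, Fintype.card_fin]
  calc n.factorial = ∑ w ∈ univ.filter (fun w : Fin n → A => empDist w = P),
          (univ.filter (fun σ : Equiv.Perm (Fin n) => w0 ∘ σ = w)).card := by
        rw [← h1, h2]
    _ ≤ ∑ _w ∈ univ.filter (fun w : Fin n → A => empDist w = P),
          ∏ a, ((univ.filter (fun i => w0 i = a)).card).factorial := by
        apply Finset.sum_le_sum
        intro w hw
        exact aux_fiber_card_le w0 w (hcnteq w (mem_filter.1 hw).2)
    _ = _ := by rw [Finset.sum_const, smul_eq_mul]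

open Finset in
lemma aux_empDist_pos {n : ℕ} {A : Type*} [Fintype A] [DecidableEq A] (hn : 0 < n)
    (z : Fin n → A) (i : Fin n) : 0 < empDist z (z i) := by
  unfold empDist
  apply div_pos _ (by exact_mod_cast hn)
  have hi : i ∈ univ.filter (fun j => z j = z i) := by simp
  exact_mod_cast Finset.card_pos.2 ⟨i, hi⟩

open Finset in
lemma aux_sum_comp {n : ℕ} {A : Type*} [Fintype A] [DecidableEq A]
    (z : Fin n → A) (F : A → ℝ) :
    ∑ a, ((univ.filter (fun i => z i = a)).card : ℝ) * F a = ∑ i, F (z i) := by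
  rw [← Finset.sum_fiberwise_of_maps_to (g := z) (fun i _ => mem_univ _)
    (fun i => F (z i))]
  apply Finset.sum_congr rfl
  intro a _
  rw [Finset.sum_congr rfl (fun i hi => by rw [(mem_filter.1 hi).2] : ∀ i ∈ univ.filter (fun i => z i = a), F (z i) = F a),
    Finset.sum_const, nsmul_eq_mul]

open Finset in
lemma aux_prod_comp {n : ℕ} {A : Type*} [Fintype A] [DecidableEq A]
    (z : Fin n → A) (F : A → ℝ) :
    ∏ i, F (z i) = ∏ a, F a ^ (univ.filter (fun i => z i = a)).card := by
  rw [← Finset.prod_fiberwise_of_maps_to (g := z) (fun i _ => mem_univ _)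
    (fun i => F (z i))]
  apply Finset.prod_congr rfl
  intro a _
  rw [Finset.prod_congr rfl (fun i hi => by rw [(mem_filter.1 hi).2] : ∀ i ∈ univ.filter (fun i => z i = a), F (z i) = F a),
    Finset.prod_const]

open Finset in
lemma aux_marg_snd {n : ℕ} {A B : Type*} [Fintype A] [DecidableEq A] [Fintype B] [DecidableEq B]
    (w : Fin n → A) (y : Fin n → B) (b : B) :
    ∑ a, (univ.filter (fun i => (w i, y i) = (a, b))).card
      = (univ.filter (fun i => y i = b)).card := by
  rw [Finset.card_eq_sum_card_fiberwise (f := w) (t := univ) (fun i _ => mem_univ _)]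
  apply Finset.sum_congr rfl
  intro a _
  congr 1
  ext i
  simp [Prod.ext_iff, and_comm]

open Finset in
lemma aux_marg_fst {n : ℕ} {A B : Type*} [Fintype A] [DecidableEq A] [Fintype B] [DecidableEq B]
    (w : Fin n → A) (y : Fin n → B) (a : A) :
    ∑ b, (univ.filter (fun i => (w i, y i) = (a, b))).card
      = (univ.filter (fun i => w i = a)).card := by
  rw [Finset.card_eq_sum_card_fiberwise (f := y) (t := univ) (fun i _ => mem_univ _)]
  apply Finset.sum_congr rfl
  intro b _
  congr 1
  ext i
  simp [Prod.ext_iff, and_comm]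

open Finset in
lemma aux_exp_empMI {n : ℕ} {A Y : Type*} [Fintype A] [DecidableEq A] [Fintype Y] [DecidableEq Y]
    (hn : 0 < n) (w : Fin n → A) (y : Fin n → Y) :
    Real.exp (n * empMI w y)
      = ∏ i, (empDist (fun j => (w j, y j)) (w i, y i)
          / (empDist w (w i) * empDist y (y i))) := by
  have hn' : (n:ℝ) ≠ 0 := by positivity
  set Q : A × Y → ℝ := empDist (fun j => (w j, y j)) with hQ
  set G : A × Y → ℝ := fun p => Q p / (empDist w p.1 * empDist y p.2) with hG
  have hmarg1 : ∀ p : A × Y, (∑ b, Q (p.1, b)) = empDist w p.1 := by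
    intro p
    rw [hQ]
    unfold empDist
    rw [← Finset.sum_div]
    congr 1
    exact_mod_cast aux_marg_fst w y p.1
  have hmarg2 : ∀ p : A × Y, (∑ a, Q (a, p.2)) = empDist y p.2 := by
    intro p
    rw [hQ]
    unfold empDist
    rw [← Finset.sum_div]
    congr 1
    exact_mod_cast aux_marg_snd w y p.2
  have hMI : empMI w y = ∑ p : A × Y, Q p * Real.log (G p) := by
    unfold empMI mutInf
    apply Finset.sum_congr rfl
    intro p _
    rw [← hQ, hmarg1 p, hmarg2 p, hG]
  have hstep : (n:ℝ) * empMI w y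
      = ∑ p : A × Y, ((univ.filter (fun i => (w i, y i) = p)).card : ℝ) * Real.log (G p) := by
    rw [hMI, Finset.mul_sum]
    apply Finset.sum_congr rfl
    intro p _
    rw [← mul_assoc]
    congr 1
    rw [hQ]
    unfold empDist
    field_simp
  have hstep2 : (n:ℝ) * empMI w y = ∑ i, Real.log (G (w i, y i)) := by
    rw [hstep]
    exact aux_sum_comp (fun i => (w i, y i)) (fun p => Real.log (G p))
  rw [hstep2, Real.exp_sum]
  apply Finset.prod_congr rfl
  intro i _
  apply Real.exp_log
  rw [hG]
  apply div_pos
  · exact aux_empDist_pos hn (fun j => (w j, y j)) i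
  · exact mul_pos (aux_empDist_pos hn w i) (aux_empDist_pos hn y i)

theorem stmt6 (U X Y : Type) [Fintype U] [Fintype X] [Fintype Y]
    [DecidableEq U] [DecidableEq X] [DecidableEq Y] :
    ∃ c : ℕ, ∀ n : ℕ, 0 < n →
      ∀ P : U × X → ℝ, IsDist P → IsTypeDen n P →
      ∀ (y : Fin n → Y) (t : ℝ),
        (∑ w : Fin n → U × X, unifType n P w * ind (empMI w y ≥ t))
          ≤ (n + 1 : ℝ) ^ c * Real.exp (-(n : ℝ) * t) := by
  classical
  refine ⟨2 * Fintype.card (U × X) + Fintype.card ((U × X) × Y), ?_⟩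
  intro n hn P hPdist _hPtype y t
  set cA := Fintype.card (U × X) with hcA
  set c2 := Fintype.card ((U × X) × Y) with hc2
  have hnR : (0:ℝ) < n := by exact_mod_cast hn
  set S : Finset (Fin n → U × X) := Finset.univ.filter (fun w => empDist w = P) with hS
  have hKcard : typeCCard n P = S.card := by
    unfold typeCCard
    rw [Nat.card_eq_fintype_card, Fintype.card_subtype]
  have hsum : ∑ w : Fin n → U × X, unifType n P w * ind (empMI w y ≥ t)
      = ∑ w ∈ S, (S.card : ℝ)⁻¹ * ind (empMI w y ≥ t) := by
    rw [hS, Finset.sum_filter]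
    apply Finset.sum_congr rfl
    intro w _
    unfold unifType
    rw [hKcard]
    split_ifs <;> simp [hS]
  rw [hsum]
  rcases S.eq_empty_or_nonempty with hSe | ⟨w0, hw0⟩
  · rw [hSe, Finset.sum_empty]
    positivity
  · have hw0' : empDist w0 = P := (Finset.mem_filter.1 hw0).2
    set m : U × X → ℕ := fun a => (Finset.univ.filter (fun i => w0 i = a)).card with hm
    have hPm : ∀ a, P a = (m a : ℝ)/n := fun a => (congrFun hw0' a).symm
    have hmn : ∀ a, m a ≤ n := by
      intro a
      calc m a ≤ (Finset.univ : Finset (Fin n)).card := Finset.card_filter_le _ _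
        _ = n := by simp
    have hmsum : ∑ a, m a = n := by
      have := Finset.card_eq_sum_card_fiberwise
        (f := w0) (s := Finset.univ) (t := Finset.univ) (fun i _ => Finset.mem_univ (w0 i))
      simpa using this.symm
    set K := S.card with hKdef
    have hK1 : 0 < K := Finset.card_pos.2 ⟨w0, hw0⟩
    have hKR : (0:ℝ) < K := by exact_mod_cast hK1
    set piP : ℝ := ∏ a, P a ^ m a with hpiP
    have hpiP_pos : 0 < piP := by
      apply Finset.prod_pos
      intro a _
      rcases Nat.eq_zero_or_pos (m a) with h | h
      · rw [h, pow_zero]; norm_num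
      · apply pow_pos
        rw [hPm a]
        have : (0:ℝ) < m a := by exact_mod_cast h
        positivity
    -- counting bound
    have hcount : (n.factorial : ℝ) ≤ (K:ℝ) * ∏ a, ((m a).factorial : ℝ) := by
      have := aux_card_typeclass hn P w0 hw0'
      rw [← hS, ← hKdef] at this
      exact_mod_cast this
    -- Stirling assembly
    have hKpi : 1 ≤ ((n:ℝ)+1)^(2*cA) * ((K:ℝ) * piP) := by
      have hfac1 : ∏ a, (((m a).factorial : ℝ) * Real.exp (m a))
          ≤ ∏ a, (((n:ℝ)+1)^2 * ((m a):ℝ)^(m a)) := by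
        apply Finset.prod_le_prod
        · intro a _; positivity
        · intro a _; exact aux_factor_bound n (m a) (hmn a)
      have hexp_prod : ∏ a, Real.exp ((m a : ℕ):ℝ) = Real.exp n := by
        rw [← Real.exp_sum]
        congr 1
        push_cast [← hmsum]
        ring
      have hL : ∏ a, (((m a).factorial : ℝ) * Real.exp (m a))
          = (∏ a, ((m a).factorial : ℝ)) * Real.exp n := by
        rw [Finset.prod_mul_distrib, hexp_prod]
      have hR : ∏ a, (((n:ℝ)+1)^2 * ((m a):ℝ)^(m a))
          = ((n:ℝ)+1)^(2*cA) * ∏ a, ((m a):ℝ)^(m a) := by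
        rw [Finset.prod_mul_distrib, Finset.prod_const, Finset.card_univ, ← hcA, ← pow_mul]
      have hpi_eq : ∏ a, ((m a):ℝ)^(m a) = piP * (n:ℝ)^n := by
        have h1 : piP = ∏ a, ((m a : ℝ)/n)^(m a) := by
          rw [hpiP]
          exact Finset.prod_congr rfl (fun a _ => by rw [hPm a])
        have h2 : ∏ a, ((n:ℝ))^(m a) = (n:ℝ)^n := by
          rw [Finset.prod_pow_eq_pow_sum, hmsum]
        have h3 : ∏ a, ((m a : ℝ)/n)^(m a)
            = (∏ a, ((m a):ℝ)^(m a)) / (n:ℝ)^n := by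
          rw [Finset.prod_congr rfl (fun a _ => div_pow _ _ _), Finset.prod_div_distrib, h2]
        rw [h1, h3]
        field_simp
      have hnn : (n:ℝ)^n ≤ (n.factorial : ℝ) * Real.exp n := aux_pow_self_le_factorial n
      have hchain : (n.factorial : ℝ) * Real.exp n
          ≤ ((n:ℝ)+1)^(2*cA) * ((K:ℝ) * piP) * ((n.factorial : ℝ) * Real.exp n) := by
        calc (n.factorial : ℝ) * Real.exp n
            ≤ ((K:ℝ) * ∏ a, ((m a).factorial : ℝ)) * Real.exp n := by
              apply mul_le_mul_of_nonneg_right hcount (Real.exp_pos _).le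
          _ = (K:ℝ) * ((∏ a, ((m a).factorial : ℝ)) * Real.exp n) := by ring
          _ ≤ (K:ℝ) * (((n:ℝ)+1)^(2*cA) * ∏ a, ((m a):ℝ)^(m a)) := by
              apply mul_le_mul_of_nonneg_left _ hKR.le
              rw [← hL, ← hR]
              exact hfac1
          _ = (K:ℝ) * (((n:ℝ)+1)^(2*cA) * (piP * (n:ℝ)^n)) := by rw [hpi_eq]
          _ ≤ (K:ℝ) * (((n:ℝ)+1)^(2*cA) * (piP * ((n.factorial : ℝ) * Real.exp n))) := by
              apply mul_le_mul_of_nonneg_left _ hKR.le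
              apply mul_le_mul_of_nonneg_left _ (by positivity)
              apply mul_le_mul_of_nonneg_left hnn hpiP_pos.le
          _ = ((n:ℝ)+1)^(2*cA) * ((K:ℝ) * piP) * ((n.factorial : ℝ) * Real.exp n) := by ring
      have hpos : (0:ℝ) < (n.factorial : ℝ) * Real.exp n := by
        have : 0 < n.factorial := Nat.factorial_pos n
        have : (0:ℝ) < (n.factorial : ℝ) := by exact_mod_cast this
        positivity
      exact (le_mul_iff_one_le_left hpos).1 hchain
    -- shell sum bound
    set R : Y → ℝ := empDist y with hR
    set cy : ℝ := ∏ i, R (y i) with hcy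
    have hcy_pos : 0 < cy := Finset.prod_pos (fun i _ => aux_empDist_pos hn y i)
    set F : (Fin n → U × X) → ℝ :=
      fun w => ∏ i, empDist (fun j => (w j, y j)) (w i, y i) with hF
    have hpicy : (0:ℝ) < piP * cy := mul_pos hpiP_pos hcy_pos
    have hKpiPpos : (0:ℝ) < (K:ℝ) * piP := mul_pos hKR hpiP_pos
    have hFnn : ∀ w : Fin n → U × X, 0 ≤ F w := by
      intro w
      rw [hF]
      apply Finset.prod_nonneg
      intro i _
      unfold empDist
      positivity
    have hshell : ∑ w ∈ S, F w ≤ ((n:ℝ)+1)^c2 * cy := by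
      set cntF : (Fin n → U × X) → (((U × X) × Y) → Fin (n+1)) :=
        fun w p => ⟨(Finset.univ.filter (fun i => (w i, y i) = p)).card,
          Nat.lt_succ_of_le (le_trans (Finset.card_filter_le _ _) (by simp))⟩ with hcntF
      have hsplit : ∑ w ∈ S, F w
          = ∑ c : ((U × X) × Y) → Fin (n+1), ∑ w ∈ S.filter (fun w => cntF w = c), F w :=
        (Finset.sum_fiberwise_of_maps_to (fun w _ => Finset.mem_univ _) F).symm
      rw [hsplit]
      have hclass : ∀ c : ((U × X) × Y) → Fin (n+1),
          ∑ w ∈ S.filter (fun w => cntF w = c), F w ≤ cy := by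
        intro c
        rcases (S.filter (fun w => cntF w = c)).eq_empty_or_nonempty with h | ⟨w1, hw1⟩
        · rw [h, Finset.sum_empty]; exact hcy_pos.le
        · set Qc : (U × X) × Y → ℝ := fun p => ((c p : ℕ) : ℝ)/n with hQc
          have hcnt_of_mem : ∀ w ∈ S.filter (fun w => cntF w = c), ∀ p,
              (Finset.univ.filter (fun i => (w i, y i) = p)).card = (c p : ℕ) := by
            intro w hw p
            have := (Finset.mem_filter.1 hw).2
            have h2 := congrFun this p
            exact congrArg Fin.val h2
          have hFw : ∀ w ∈ S.filter (fun w => cntF w = c), F w = ∏ i, Qc (w i, y i) := by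
            intro w hw
            rw [hF]
            apply Finset.prod_congr rfl
            intro i _
            unfold empDist
            rw [hcnt_of_mem w hw (w i, y i), hQc]
          have hmarg : ∀ b : Y, ∑ a : U × X, Qc (a, b) = R b := by
            intro b
            rw [hQc, hR]
            unfold empDist
            rw [← Finset.sum_div]
            congr 1
            rw [Finset.sum_congr rfl (fun a _ => by
              rw [← hcnt_of_mem w1 hw1 (a, b)] : ∀ a ∈ Finset.univ,
                (((c (a,b) : ℕ)):ℝ) = ((Finset.univ.filter (fun i => (w1 i, y i) = (a, b))).card : ℝ))]
            exact_mod_cast aux_marg_snd w1 y b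
          calc ∑ w ∈ S.filter (fun w => cntF w = c), F w
              = ∑ w ∈ S.filter (fun w => cntF w = c), ∏ i, Qc (w i, y i) :=
                Finset.sum_congr rfl hFw
            _ ≤ ∑ w : Fin n → U × X, ∏ i, Qc (w i, y i) := by
                apply Finset.sum_le_sum_of_subset_of_nonneg (Finset.subset_univ _)
                intro w _ _
                apply Finset.prod_nonneg
                intro i _
                rw [hQc]
                positivity
            _ = ∏ i, ∑ a : U × X, Qc (a, y i) :=
                (Fintype.prod_sum (fun i a => Qc (a, y i))).symm
            _ = ∏ i, R (y i) := Finset.prod_congr rfl (fun i _ => hmarg (y i))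
            _ = cy := by rw [hcy]
      calc ∑ c : ((U × X) × Y) → Fin (n+1), ∑ w ∈ S.filter (fun w => cntF w = c), F w
          ≤ ∑ _c : ((U × X) × Y) → Fin (n+1), cy := Finset.sum_le_sum (fun c _ => hclass c)
        _ = (Fintype.card (((U × X) × Y) → Fin (n+1)) : ℝ) * cy := by
            rw [Finset.sum_const, Finset.card_univ, nsmul_eq_mul]
        _ = ((n:ℝ)+1)^c2 * cy := by
            rw [Fintype.card_fun, Fintype.card_fin, hc2]
            push_cast
            ring
    -- pointwise bound
    have hpoint : ∀ w ∈ S, ind (empMI w y ≥ t)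
        ≤ Real.exp (-(n:ℝ)*t) * (F w / (piP * cy)) := by
      intro w hw
      have hw' : empDist w = P := (Finset.mem_filter.1 hw).2
      have hexp_eq : Real.exp ((n:ℝ) * empMI w y) = F w / (piP * cy) := by
        rw [aux_exp_empMI hn w y]
        rw [Finset.prod_div_distrib, Finset.prod_mul_distrib]
        have hPw : ∏ i, empDist w (w i) = piP := by
          have h1 : ∏ i, empDist w (w i) = ∏ a, empDist w a ^
              (Finset.univ.filter (fun i => w i = a)).card :=
            aux_prod_comp w (empDist w)
          rw [h1, hpiP]
          apply Finset.prod_congr rfl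
          intro a _
          rw [hw']
          congr 1
          -- count_w a = m a
          have h2 : ((Finset.univ.filter (fun i => w i = a)).card : ℝ)/n = ((m a):ℝ)/n := by
            rw [← hPm a]
            exact congrFun hw' a
          field_simp at h2
          exact_mod_cast h2
        rw [hPw]
      calc ind (empMI w y ≥ t) ≤ Real.exp (-(n:ℝ)*t) * Real.exp ((n:ℝ) * empMI w y) := by
            unfold ind
            split_ifs with h
            · rw [← Real.exp_add]
              apply Real.one_le_exp
              have : 0 ≤ (n:ℝ) * (empMI w y - t) := by
                apply mul_nonneg hnR.le
                linarith [h]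
              linarith [this]
            · positivity
        _ = Real.exp (-(n:ℝ)*t) * (F w / (piP * cy)) := by rw [hexp_eq]
    -- final chain
    have hcoef : (0:ℝ) ≤ (K:ℝ)⁻¹ * Real.exp (-(n:ℝ)*t) * (piP * cy)⁻¹ :=
      mul_nonneg (mul_nonneg (inv_nonneg.2 hKR.le) (Real.exp_pos _).le)
        (inv_nonneg.2 hpicy.le)
    have hnp1 : (0:ℝ) < (n:ℝ)+1 := by linarith
    calc ∑ w ∈ S, (K : ℝ)⁻¹ * ind (empMI w y ≥ t)
        ≤ ∑ w ∈ S, (K : ℝ)⁻¹ * (Real.exp (-(n:ℝ)*t) * (F w / (piP * cy))) := by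
          apply Finset.sum_le_sum
          intro w hw
          exact mul_le_mul_of_nonneg_left (hpoint w hw) (inv_nonneg.2 hKR.le)
      _ = (K : ℝ)⁻¹ * Real.exp (-(n:ℝ)*t) * (piP * cy)⁻¹ * ∑ w ∈ S, F w := by
          rw [Finset.mul_sum]
          exact Finset.sum_congr rfl fun w _ => by rw [div_eq_mul_inv]; ring
      _ ≤ (K : ℝ)⁻¹ * Real.exp (-(n:ℝ)*t) * (piP * cy)⁻¹ * (((n:ℝ)+1)^c2 * cy) :=
          mul_le_mul_of_nonneg_left hshell hcoef
      _ = Real.exp (-(n:ℝ)*t) * ((K:ℝ) * piP)⁻¹ * ((n:ℝ)+1)^c2 * (cy⁻¹ * cy) := by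
          rw [mul_inv, mul_inv]
          ring
      _ = Real.exp (-(n:ℝ)*t) * ((K:ℝ) * piP)⁻¹ * ((n:ℝ)+1)^c2 := by
          rw [inv_mul_cancel₀ (ne_of_gt hcy_pos), mul_one]
      _ ≤ Real.exp (-(n:ℝ)*t) * ((n:ℝ)+1)^(2*cA) * ((n:ℝ)+1)^c2 := by
          have hKpinv : ((K:ℝ)*piP)⁻¹ ≤ ((n:ℝ)+1)^(2*cA) := by
            rw [← one_div, div_le_iff₀ hKpiPpos]
            exact hKpi
          apply mul_le_mul_of_nonneg_right _ (pow_nonneg hnp1.le c2)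
          exact mul_le_mul_of_nonneg_left hKpinv (Real.exp_pos _).le
      _ = ((n:ℝ) + 1) ^ (2*cA + c2) * Real.exp (-(n:ℝ) * t) := by
          rw [pow_add]
          ring
end

section
/- Fix a blocklength n, a joint type P_UX with denominator n on U×X, a sequence u ∈ Uⁿ of type P_U, an arbitrary sequence y ∈ Yⁿ, and t ∈ ℝ. Let X be drawn uniformly at random from T_{P_{X|U}}(u). Then Pr[Î((u,X) ∧ y) ≥ t] ≤ (n+1)^c · exp(−n·(t − Î(u ∧ y))), for a constant c depending only on |U|, |X|, |Y|. -/
open scoped BigOperators ENNReal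

/-! ### Auxiliary lemmas for the proof of `stmt7` -/

section AuxCounting

open Finset

/-- count of value `v` in sequence `w` -/
def cnt {α V : Type*} [Fintype α] [DecidableEq V] (w : α → V) (v : V) : ℕ :=
  (Finset.univ.filter (fun a => w a = v)).card

variable {α ι V W X : Type*}

set_option linter.unusedSectionVars false

lemma cnt_pos [Fintype α] [DecidableEq V] (w : α → V) (a : α) : 0 < cnt w (w a) :=
  Finset.card_pos.mpr ⟨a, Finset.mem_filter.mpr ⟨Finset.mem_univ _, rfl⟩⟩

lemma cnt_le [Fintype α] [DecidableEq V] (w : α → V) (v : V) : cnt w v ≤ Fintype.card α :=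
  le_trans (Finset.card_filter_le _ _) (le_of_eq Finset.card_univ)

lemma sum_cnt [Fintype α] [Fintype V] [DecidableEq V] (w : α → V) :
    ∑ v, cnt w v = Fintype.card α := by
  rw [← Finset.card_univ]
  exact (Finset.card_eq_sum_card_fiberwise (fun a _ => Finset.mem_univ (w a))).symm

/-- regrouping a sum over the domain by values -/
lemma sum_comp_cnt [Fintype α] [Fintype V] [DecidableEq V] (w : α → V) (g : V → ℝ) :
    ∑ a, g (w a) = ∑ v, (cnt w v : ℝ) * g v := by
  rw [← Finset.sum_fiberwise univ w (fun a => g (w a))]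
  refine Finset.sum_congr rfl fun v _ => ?_
  rw [Finset.sum_congr rfl (fun a ha => by rw [(Finset.mem_filter.mp ha).2]),
    Finset.sum_const, nsmul_eq_mul]
  rfl

lemma cnt_marg_fst [Fintype α] [DecidableEq V] [Fintype W] [DecidableEq W]
    (w : α → V) (z : α → W) (v : V) :
    ∑ b, cnt (fun a => (w a, z a)) (v, b) = cnt w v := by
  rw [show cnt w v = (Finset.univ.filter (fun a => w a = v)).card from rfl,
    Finset.card_eq_sum_card_fiberwise (f := z) (t := Finset.univ) (fun a _ => Finset.mem_univ _)]
  refine Finset.sum_congr rfl fun b _ => ?_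
  rw [Finset.filter_filter]
  show cnt (fun a => (w a, z a)) (v, b) = _
  unfold cnt
  congr 1
  apply Finset.filter_congr
  intro a _
  simp [Prod.ext_iff]

lemma cnt_marg_snd [Fintype α] [Fintype V] [DecidableEq V] [DecidableEq W]
    (w : α → V) (z : α → W) (b : W) :
    ∑ v, cnt (fun a => (w a, z a)) (v, b) = cnt z b := by
  rw [← cnt_marg_fst z w b]
  refine Finset.sum_congr rfl fun v _ => ?_
  unfold cnt
  congr 1
  apply Finset.filter_congr
  intro a _
  simp [Prod.ext_iff]
  tauto

lemma cnt_pair_le_fst [Fintype α] [DecidableEq V] [DecidableEq W]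
    (w : α → V) (z : α → W) (v : V) (b : W) :
    cnt (fun a => (w a, z a)) (v, b) ≤ cnt w v := by
  apply Finset.card_le_card
  intro a ha
  rw [Finset.mem_filter] at ha ⊢
  exact ⟨ha.1, congrArg Prod.fst ha.2⟩

lemma cnt_pair_le_snd [Fintype α] [DecidableEq V] [DecidableEq W]
    (w : α → V) (z : α → W) (v : V) (b : W) :
    cnt (fun a => (w a, z a)) (v, b) ≤ cnt z b := by
  apply Finset.card_le_card
  intro a ha
  rw [Finset.mem_filter] at ha ⊢
  exact ⟨ha.1, congrArg Prod.snd ha.2⟩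

lemma cnt_rot {A B C : Type*} [Fintype α] [DecidableEq A] [DecidableEq B] [DecidableEq C]
    (w : α → A) (z : α → B) (v : α → C) (a : A) (b : B) (c : C) :
    cnt (fun i => ((w i, z i), v i)) ((a, b), c)
      = cnt (fun i => ((w i, v i), z i)) ((a, c), b) := by
  unfold cnt
  congr 1
  apply Finset.filter_congr
  intro i _
  simp only [Prod.mk.injEq]
  tauto

lemma cnt_comp_perm [Fintype α] [DecidableEq V] (w : α → V) (g : Equiv.Perm α) (v : V) :
    cnt (fun a => w (g a)) v = cnt w v := by
  classical
  unfold cnt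
  rw [← Fintype.card_subtype, ← Fintype.card_subtype]
  exact Fintype.card_congr (g.subtypeEquiv fun a => Iff.rfl)

lemma exists_perm [Fintype α] [DecidableEq V] {w w0 : α → V}
    (h : ∀ v, cnt w v = cnt w0 v) : ∃ g : Equiv.Perm α, ∀ a, w0 (g a) = w a := by
  classical
  have e : ∀ v, {a // w a = v} ≃ {a // w0 a = v} := fun v =>
    Fintype.equivOfCardEq (by
      rw [Fintype.card_subtype, Fintype.card_subtype]; exact h v)
  refine ⟨(Equiv.sigmaFiberEquiv w).symm.trans ((Equiv.sigmaCongrRight e).trans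
    (Equiv.sigmaFiberEquiv w0)), fun a => ?_⟩
  exact (e (w a) ⟨a, rfl⟩).2

lemma card_perm_stab [Fintype α] [DecidableEq α] [Fintype V] [DecidableEq V] (w : α → V) :
    (univ.filter fun g : Equiv.Perm α => w ∘ g = w).card = ∏ v, Nat.factorial (cnt w v) := by
  rw [← Fintype.card_subtype, DomMulAct.stabilizer_card]
  exact Finset.prod_congr rfl fun v _ => by rw [Fintype.card_subtype]; rfl

lemma key_count [Fintype α] [DecidableEq α] [Fintype ι] [DecidableEq ι] [Fintype X] [DecidableEq X]
    (f : α → ι) (x0 : α → X) :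
    (univ.filter fun x : α → X =>
        ∀ v, cnt (fun a => (f a, x a)) v = cnt (fun a => (f a, x0 a)) v).card
      * ∏ v : ι × X, Nat.factorial (cnt (fun a => (f a, x0 a)) v)
      = ∏ i : ι, Nat.factorial (cnt f i) := by
  classical
  have hmap : ∀ g ∈ (univ.filter (fun g : Equiv.Perm α => f ∘ ⇑g = f)),
      (x0 ∘ ⇑g) ∈ (univ.filter fun x : α → X =>
        ∀ v, cnt (fun a => (f a, x a)) v = cnt (fun a => (f a, x0 a)) v) := by
    intro g hg
    rw [mem_filter] at hg
    rw [mem_filter]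
    refine ⟨mem_univ _, fun v => ?_⟩
    have h1 : (fun a => (f a, (x0 ∘ ⇑g) a)) = fun a => ((fun b => (f b, x0 b)) (g a)) := by
      funext a
      exact Prod.ext ((congrFun hg.2 a).symm) rfl
    rw [h1]
    exact cnt_comp_perm (fun b => (f b, x0 b)) g v
  have hfib : ∀ x ∈ (univ.filter fun x : α → X =>
        ∀ v, cnt (fun a => (f a, x a)) v = cnt (fun a => (f a, x0 a)) v),
      ((univ.filter (fun g : Equiv.Perm α => f ∘ ⇑g = f)).filter
          (fun g : Equiv.Perm α => x0 ∘ ⇑g = x)).card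
      = ∏ v : ι × X, Nat.factorial (cnt (fun a => (f a, x0 a)) v) := by
    intro x hx
    rw [mem_filter] at hx
    obtain ⟨g0, hg0⟩ := exists_perm (w := fun a => (f a, x a)) (w0 := fun a => (f a, x0 a)) hx.2
    have hfg0 : ∀ a, f (g0 a) = f a := fun a => congrArg Prod.fst (hg0 a)
    have hxg0 : ∀ a, x0 (g0 a) = x a := fun a => congrArg Prod.snd (hg0 a)
    rw [← card_perm_stab (fun a => (f a, x0 a))]
    apply Finset.card_bij (fun (g : Equiv.Perm α) _ => g * g0⁻¹)
    · intro g hgm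
      rw [mem_filter, mem_filter] at hgm
      obtain ⟨⟨-, hfg⟩, hxg⟩ := hgm
      have hfg : ∀ a, f (g a) = f a := fun a => congrFun hfg a
      have hxg : ∀ a, x0 (g a) = x a := fun a => congrFun hxg a
      have hfg0inv : ∀ a, f (g0⁻¹ a) = f a := by
        intro a
        conv_rhs => rw [← (show g0 (g0⁻¹ a) = a from g0.apply_symm_apply a), hfg0]
      have hxg0inv : ∀ a, x (g0⁻¹ a) = x0 a := by
        intro a
        conv_rhs => rw [← (show g0 (g0⁻¹ a) = a from g0.apply_symm_apply a), hxg0]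
      rw [mem_filter]
      refine ⟨mem_univ _, funext fun a => ?_⟩
      show (f (g (g0⁻¹ a)), x0 (g (g0⁻¹ a))) = (f a, x0 a)
      rw [hfg, hxg, hfg0inv, hxg0inv]
    · intro g1 _ g2 _ he
      exact mul_right_cancel he
    · intro h hh
      rw [mem_filter] at hh
      have hp : ∀ a, f (h a) = f a ∧ x0 (h a) = x0 a := by
        intro a
        have h2 : (f (h a), x0 (h a)) = (f a, x0 a) := congrFun hh.2 a
        rw [Prod.mk.injEq] at h2
        exact h2
      refine ⟨h * g0, ?_, by group⟩
      rw [mem_filter, mem_filter]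
      refine ⟨⟨mem_univ _, funext fun a => ?_⟩, funext fun a => ?_⟩
      · show f (h (g0 a)) = f a
        rw [(hp (g0 a)).1, hfg0]
      · show x0 (h (g0 a)) = x a
        rw [(hp (g0 a)).2, hxg0]
  calc (univ.filter fun x : α → X =>
        ∀ v, cnt (fun a => (f a, x a)) v = cnt (fun a => (f a, x0 a)) v).card
          * ∏ v : ι × X, Nat.factorial (cnt (fun a => (f a, x0 a)) v)
      = ∑ x ∈ (univ.filter fun x : α → X =>
          ∀ v, cnt (fun a => (f a, x a)) v = cnt (fun a => (f a, x0 a)) v),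
          ((univ.filter (fun g : Equiv.Perm α => f ∘ ⇑g = f)).filter
            (fun g : Equiv.Perm α => x0 ∘ ⇑g = x)).card := by
        rw [Finset.sum_congr rfl hfib, Finset.sum_const, smul_eq_mul]
    _ = (univ.filter (fun g : Equiv.Perm α => f ∘ ⇑g = f)).card :=
        (Finset.card_eq_sum_card_fiberwise hmap).symm
    _ = ∏ i : ι, Nat.factorial (cnt f i) := card_perm_stab f

lemma factorial_lower (k : ℕ) : Real.exp (k * Real.log k - k) ≤ (Nat.factorial k : ℝ) := by
  rcases Nat.eq_zero_or_pos k with hk | hk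
  · subst hk; simp
  have hkpos : (0:ℝ) < k := by exact_mod_cast hk
  have h1 : ((k:ℝ)) ^ k / (Nat.factorial k : ℝ) ≤ Real.exp k := by
    have := Real.sum_le_exp_of_nonneg (x := (k:ℝ)) (le_of_lt hkpos) (k+1)
    refine le_trans ?_ this
    have : ((k:ℝ)) ^ k / (Nat.factorial k : ℝ) = (fun i => ((k:ℝ))^i / Nat.factorial i) k := rfl
    rw [this]
    apply Finset.single_le_sum (f := fun i => ((k:ℝ))^i / Nat.factorial i)
    · intro i _
      positivity
    · simp
  have h2 : Real.exp (k * Real.log k) = (k:ℝ) ^ k := by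
    rw [← Real.log_pow, Real.exp_log (by positivity)]
  rw [Real.exp_sub, h2]
  rw [div_le_iff₀ (Real.exp_pos _)]
  rw [div_le_iff₀ (by positivity)] at h1
  linarith [h1]

lemma factorial_upper_aux (k : ℕ) (hk : 1 ≤ k) :
    (Nat.factorial k : ℝ) ≤ Real.exp 1 * k * Real.exp (k * Real.log k - k) := by
  induction k, hk using Nat.le_induction with
  | base =>
    simp only [Nat.factorial_one, Nat.cast_one, one_mul, Real.log_one, mul_zero, zero_sub]
    rw [mul_one, ← Real.exp_add]
    norm_num
  | succ k hk ih =>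
    have hkpos : (0:ℝ) < k := by exact_mod_cast hk
    have hkp1 : (0:ℝ) < (k:ℝ) + 1 := by positivity
    have hfact : (Nat.factorial (k+1) : ℝ) = ((k:ℝ)+1) * Nat.factorial k := by
      push_cast [Nat.factorial_succ]; ring
    have hlog : Real.log ((k:ℝ)+1) - Real.log k ≥ 1/((k:ℝ)+1) := by
      have h := Real.log_le_sub_one_of_pos (x := (k:ℝ)/((k:ℝ)+1)) (by positivity)
      rw [Real.log_div (ne_of_gt hkpos) (ne_of_gt hkp1)] at h
      have : (k:ℝ)/((k:ℝ)+1) - 1 = -(1/((k:ℝ)+1)) := by field_simp; ring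
      rw [this] at h
      linarith
    have hexp : Real.log k + (k * Real.log k - k) ≤ ((k:ℝ)+1) * Real.log ((k:ℝ)+1) - ((k:ℝ)+1) := by
      have h2 : ((k:ℝ)+1) * (Real.log ((k:ℝ)+1) - Real.log k) ≥ 1 := by
        have := mul_le_mul_of_nonneg_left hlog (le_of_lt hkp1)
        calc (1:ℝ) = ((k:ℝ)+1) * (1/((k:ℝ)+1)) := by field_simp
          _ ≤ ((k:ℝ)+1) * (Real.log ((k:ℝ)+1) - Real.log k) := by
              apply mul_le_mul_of_nonneg_left hlog (le_of_lt hkp1)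
      nlinarith [h2]
    calc (Nat.factorial (k+1) : ℝ) = ((k:ℝ)+1) * Nat.factorial k := hfact
      _ ≤ ((k:ℝ)+1) * (Real.exp 1 * k * Real.exp (k * Real.log k - k)) := by
          apply mul_le_mul_of_nonneg_left ih (le_of_lt hkp1)
      _ = Real.exp 1 * ((k:ℝ)+1) * (Real.exp (Real.log k) * Real.exp (k * Real.log k - k)) := by
          rw [Real.exp_log hkpos]; ring
      _ = Real.exp 1 * ((k:ℝ)+1) * Real.exp (Real.log k + (k * Real.log k - k)) := by
          rw [Real.exp_add]
      _ ≤ Real.exp 1 * ((k:ℝ)+1) * Real.exp (((k:ℝ)+1) * Real.log ((k:ℝ)+1) - ((k:ℝ)+1)) := by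
          apply mul_le_mul_of_nonneg_left (Real.exp_le_exp.mpr hexp) (by positivity)
      _ = Real.exp 1 * ((k:ℕ)+1 : ℕ) * Real.exp (((k+1:ℕ):ℝ) * Real.log ((k+1:ℕ):ℝ) - ((k+1:ℕ):ℝ)) := by
          push_cast; ring_nf

lemma factorial_upper (k : ℕ) :
    (Nat.factorial k : ℝ) ≤ Real.exp 1 * ((k:ℝ)+1) * Real.exp (k * Real.log k - k) := by
  rcases Nat.eq_zero_or_pos k with hk | hk
  · subst hk
    simp only [Nat.factorial_zero, Nat.cast_one, Nat.cast_zero, zero_add, mul_one, Real.log_zero,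
      mul_zero, zero_sub, neg_zero, Real.exp_zero]
    linarith [Real.exp_one_gt_d9]
  · refine le_trans (factorial_upper_aux k hk) ?_
    have hkpos : (0:ℝ) < k := by exact_mod_cast hk
    have : Real.exp 1 * (k:ℝ) ≤ Real.exp 1 * ((k:ℝ)+1) := by
      apply mul_le_mul_of_nonneg_left (by linarith) (le_of_lt (Real.exp_pos 1))
    exact mul_le_mul_of_nonneg_right this (le_of_lt (Real.exp_pos _))

lemma empMI_eq {A B : Type*} [Fintype A] [Fintype B] [DecidableEq A] [DecidableEq B] {n : ℕ}
    (hn : 0 < n) (w : Fin n → A) (z : Fin n → B) :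
    (n : ℝ) * empMI w z
      = (∑ i, Real.log (cnt (fun j => (w j, z j)) (w i, z i))) + n * Real.log n
        - (∑ i, Real.log (cnt w (w i))) - (∑ i, Real.log (cnt z (z i))) := by
  have hn' : ((n:ℝ)) ≠ 0 := Nat.cast_ne_zero.mpr hn.ne'
  have hnpos : (0:ℝ) < n := by positivity
  have hq : ∀ p : A × B, empDist (fun i => (w i, z i)) p = (cnt (fun i => (w i, z i)) p : ℝ)/n :=
    fun p => rfl
  have hm1 : ∀ p : A × B, (∑ b, empDist (fun i => (w i, z i)) (p.1, b)) = (cnt w p.1 : ℝ)/n := by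
    intro p
    simp only [hq]
    rw [← Finset.sum_div]
    congr 1
    rw [← Nat.cast_sum]
    exact_mod_cast congrArg (Nat.cast (R := ℝ)) (cnt_marg_fst w z p.1)
  have hm2 : ∀ p : A × B, (∑ a, empDist (fun i => (w i, z i)) (a, p.2)) = (cnt z p.2 : ℝ)/n := by
    intro p
    simp only [hq]
    rw [← Finset.sum_div]
    congr 1
    rw [← Nat.cast_sum]
    exact_mod_cast congrArg (Nat.cast (R := ℝ)) (cnt_marg_snd w z p.2)
  have key : (n : ℝ) * empMI w z
      = ∑ p : A × B, (cnt (fun i => (w i, z i)) p : ℝ)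
          * Real.log ((cnt (fun i => (w i, z i)) p : ℝ) * n / ((cnt w p.1 : ℝ) * (cnt z p.2 : ℝ))) := by
    rw [empMI, mutInf, Finset.mul_sum]
    refine Finset.sum_congr rfl fun p _ => ?_
    rw [hq, hm1, hm2]
    rcases Nat.eq_zero_or_pos (cnt (fun i => (w i, z i)) p) with hc | hc
    · rw [hc]; simp
    · have hc1 : 0 < cnt w p.1 := lt_of_lt_of_le hc (by
        have := cnt_pair_le_fst w z p.1 p.2
        simpa using this)
      have hc2 : 0 < cnt z p.2 := lt_of_lt_of_le hc (by
        have := cnt_pair_le_snd w z p.1 p.2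
        simpa using this)
      have hcr : (0:ℝ) < cnt (fun i => (w i, z i)) p := by exact_mod_cast hc
      have hc1r : (0:ℝ) < cnt w p.1 := by exact_mod_cast hc1
      have hc2r : (0:ℝ) < cnt z p.2 := by exact_mod_cast hc2
      have harg : ((cnt (fun i => (w i, z i)) p : ℝ)/n)
            / (((cnt w p.1 : ℝ)/n) * ((cnt z p.2 : ℝ)/n))
          = (cnt (fun i => (w i, z i)) p : ℝ) * n / ((cnt w p.1 : ℝ) * (cnt z p.2 : ℝ)) := by
        field_simp
      rw [harg]
      field_simp
  rw [key]
  rw [← sum_comp_cnt (fun i => (w i, z i))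
    (fun p => Real.log ((cnt (fun i => (w i, z i)) p : ℝ) * n / ((cnt w p.1 : ℝ) * (cnt z p.2 : ℝ))))]
  have hterm : ∀ i, Real.log ((cnt (fun j => (w j, z j)) (w i, z i) : ℝ) * n
        / ((cnt w (w i) : ℝ) * (cnt z (z i) : ℝ)))
      = Real.log (cnt (fun j => (w j, z j)) (w i, z i)) + Real.log n
        - Real.log (cnt w (w i)) - Real.log (cnt z (z i)) := by
    intro i
    have h1 : (0:ℝ) < cnt (fun j => (w j, z j)) (w i, z i) := by
      exact_mod_cast cnt_pos (fun j => (w j, z j)) i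
    have h2 : (0:ℝ) < cnt w (w i) := by exact_mod_cast cnt_pos w i
    have h3 : (0:ℝ) < cnt z (z i) := by exact_mod_cast cnt_pos z i
    rw [Real.log_div (by positivity) (by positivity), Real.log_mul (ne_of_gt h1) hn',
      Real.log_mul (ne_of_gt h2) (ne_of_gt h3)]
    ring
  rw [Finset.sum_congr rfl (fun i _ => hterm i)]
  rw [Finset.sum_sub_distrib, Finset.sum_sub_distrib, Finset.sum_add_distrib,
    Finset.sum_const, Finset.card_univ, Fintype.card_fin, nsmul_eq_mul]

variable {α ι X : Type*} [Fintype α] [DecidableEq α] [Fintype ι] [DecidableEq ι]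
    [Fintype X] [DecidableEq X]

/-- Upper bound on the cardinality of a conditional type class. -/
lemma class_card_le (f : α → ι) (x0 : α → X) :
    ((univ.filter fun x : α → X =>
        ∀ v, cnt (fun a => (f a, x a)) v = cnt (fun a => (f a, x0 a)) v).card : ℝ)
      ≤ Real.exp ((∑ a, Real.log (cnt f (f a)))
          - ∑ a, Real.log (cnt (fun b => (f b, x0 b)) (f a, x0 a))) := by
  classical
  set C := univ.filter fun x : α → X =>
      ∀ v, cnt (fun a => (f a, x a)) v = cnt (fun a => (f a, x0 a)) v with hC
  have hsum : ∑ x : α → X,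
      (∏ a, (cnt (fun b => (f b, x0 b)) (f a, x a) : ℝ) / (cnt f (f a) : ℝ)) = 1 := by
    have h0 := Finset.prod_univ_sum (fun _ : α => (univ : Finset X))
      (fun a b => (cnt (fun c => (f c, x0 c)) (f a, b) : ℝ) / (cnt f (f a) : ℝ))
    rw [show (∑ x : α → X, ∏ a, (cnt (fun b => (f b, x0 b)) (f a, x a) : ℝ) / (cnt f (f a) : ℝ))
        = ∑ x ∈ Fintype.piFinset (fun _ : α => (univ : Finset X)),
            ∏ a, (cnt (fun b => (f b, x0 b)) (f a, x a) : ℝ) / (cnt f (f a) : ℝ) by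
      rw [Fintype.piFinset_univ]]
    rw [← h0, Finset.prod_eq_one]
    intro a _
    rw [← Finset.sum_div, ← Nat.cast_sum, cnt_marg_fst (fun c => f c) (fun c => x0 c) (f a)]
    have : (0:ℝ) < cnt f (f a) := by exact_mod_cast cnt_pos f a
    field_simp
  have hqval : ∀ x ∈ C,
      (∏ a, (cnt (fun b => (f b, x0 b)) (f a, x a) : ℝ) / (cnt f (f a) : ℝ))
      = Real.exp ((∑ a, Real.log (cnt (fun b => (f b, x0 b)) (f a, x0 a)))
          - ∑ a, Real.log (cnt f (f a))) := by
    intro x hx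
    rw [hC, mem_filter] at hx
    have hcx : ∀ v, cnt (fun a => (f a, x a)) v = cnt (fun a => (f a, x0 a)) v := hx.2
    have hpos : ∀ a, (0:ℝ) < cnt (fun b => (f b, x0 b)) (f a, x a) := by
      intro a
      rw [← hcx (f a, x a)]
      exact_mod_cast cnt_pos (fun b => (f b, x b)) a
    have hposf : ∀ a, (0:ℝ) < cnt f (f a) := fun a => by exact_mod_cast cnt_pos f a
    have hstep : ∀ a ∈ univ, (cnt (fun b => (f b, x0 b)) (f a, x a) : ℝ) / (cnt f (f a) : ℝ)
        = Real.exp (Real.log (cnt (fun b => (f b, x0 b)) (f a, x a)) - Real.log (cnt f (f a))) := by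
      intro a _
      rw [Real.exp_sub, Real.exp_log (hpos a), Real.exp_log (hposf a)]
    rw [Finset.prod_congr rfl hstep, ← Real.exp_sum, Finset.sum_sub_distrib]
    congr 1
    congr 1
    -- ∑ a, log (cnt pair_x0 (f a, x a)) = ∑ a, log (cnt pair_x0 (f a, x0 a))
    have e1 : ∀ a, Real.log (cnt (fun b => (f b, x0 b)) (f a, x a) : ℕ)
        = Real.log (cnt (fun b => (f b, x b)) (f a, x a) : ℕ) := fun a => by rw [hcx (f a, x a)]
    have h1 : (∑ a, Real.log ((cnt (fun b => (f b, x b)) (f a, x a) : ℕ) : ℝ))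
        = ∑ v : ι × X, (cnt (fun a => (f a, x a)) v : ℝ)
            * Real.log (cnt (fun b => (f b, x b)) v) :=
      sum_comp_cnt (fun a => (f a, x a)) (fun v => Real.log (cnt (fun b => (f b, x b)) v))
    have h2 : (∑ a, Real.log ((cnt (fun b => (f b, x0 b)) (f a, x0 a) : ℕ) : ℝ))
        = ∑ v : ι × X, (cnt (fun a => (f a, x0 a)) v : ℝ)
            * Real.log (cnt (fun b => (f b, x0 b)) v) :=
      sum_comp_cnt (fun a => (f a, x0 a)) (fun v => Real.log (cnt (fun b => (f b, x0 b)) v))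
    calc (∑ a, Real.log ((cnt (fun b => (f b, x0 b)) (f a, x a) : ℕ) : ℝ))
        = ∑ a, Real.log ((cnt (fun b => (f b, x b)) (f a, x a) : ℕ) : ℝ) :=
          Finset.sum_congr rfl (fun a _ => e1 a)
      _ = ∑ v : ι × X, (cnt (fun a => (f a, x a)) v : ℝ)
            * Real.log (cnt (fun b => (f b, x b)) v) := h1
      _ = ∑ v : ι × X, (cnt (fun a => (f a, x0 a)) v : ℝ)
            * Real.log (cnt (fun b => (f b, x0 b)) v) :=
          Finset.sum_congr rfl (fun v _ => by rw [hcx v])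
      _ = ∑ a, Real.log ((cnt (fun b => (f b, x0 b)) (f a, x0 a) : ℕ) : ℝ) := h2.symm
  -- now sum the constant over C
  have hle : (C.card : ℝ) * Real.exp ((∑ a, Real.log (cnt (fun b => (f b, x0 b)) (f a, x0 a)))
      - ∑ a, Real.log (cnt f (f a))) ≤ 1 := by
    rw [← hsum]
    calc (C.card : ℝ) * Real.exp _ = ∑ x ∈ C,
          (∏ a, (cnt (fun b => (f b, x0 b)) (f a, x a) : ℝ) / (cnt f (f a) : ℝ)) := by
          rw [Finset.sum_congr rfl hqval, Finset.sum_const, nsmul_eq_mul]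
      _ ≤ _ := by
          apply Finset.sum_le_sum_of_subset_of_nonneg (Finset.subset_univ C)
          intro x _ _
          apply Finset.prod_nonneg; intro a _; positivity
  have hp := Real.exp_pos ((∑ a, Real.log (cnt (fun b => (f b, x0 b)) (f a, x0 a)))
      - ∑ a, Real.log (cnt f (f a)))
  calc (C.card : ℝ)
      = ((C.card : ℝ) * Real.exp ((∑ a, Real.log (cnt (fun b => (f b, x0 b)) (f a, x0 a)))
          - ∑ a, Real.log (cnt f (f a)))) * Real.exp ((∑ a, Real.log (cnt f (f a)))
          - ∑ a, Real.log (cnt (fun b => (f b, x0 b)) (f a, x0 a))) := by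
        rw [mul_assoc, ← Real.exp_add]
        simp
    _ ≤ 1 * Real.exp ((∑ a, Real.log (cnt f (f a)))
          - ∑ a, Real.log (cnt (fun b => (f b, x0 b)) (f a, x0 a))) :=
        mul_le_mul_of_nonneg_right hle (le_of_lt (Real.exp_pos _))
    _ = _ := one_mul _

/-- Lower bound on the cardinality of the shell. -/
lemma shell_card_ge (hα : 1 ≤ Fintype.card α) (f : α → ι) (x0 : α → X) :
    Real.exp ((∑ a, Real.log (cnt f (f a)))
        - ∑ a, Real.log (cnt (fun b => (f b, x0 b)) (f a, x0 a)))
      ≤ ((univ.filter fun x : α → X =>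
          ∀ v, cnt (fun a => (f a, x a)) v = cnt (fun a => (f a, x0 a)) v).card : ℝ)
        * ((Fintype.card α : ℝ) + 1) ^ (3 * (Fintype.card ι * Fintype.card X)) := by
  classical
  set n := Fintype.card α with hn
  set s := (univ.filter fun x : α → X =>
      ∀ v, cnt (fun a => (f a, x a)) v = cnt (fun a => (f a, x0 a)) v).card with hs
  have hkey : (s : ℝ) * ∏ v : ι × X, (Nat.factorial (cnt (fun a => (f a, x0 a)) v) : ℝ)
      = ∏ i : ι, (Nat.factorial (cnt f i) : ℝ) := by
    rw [← Nat.cast_prod, ← Nat.cast_prod, ← Nat.cast_mul]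
    exact_mod_cast congrArg (Nat.cast (R := ℝ)) (key_count f x0)
  have hLf : (∑ i : ι, ((cnt f i : ℝ) * Real.log (cnt f i)))
      = ∑ a, Real.log (cnt f (f a)) :=
    (sum_comp_cnt f (fun i => Real.log (cnt f i))).symm
  have hL0 : (∑ v : ι × X, ((cnt (fun a => (f a, x0 a)) v : ℝ)
        * Real.log (cnt (fun a => (f a, x0 a)) v)))
      = ∑ a, Real.log (cnt (fun b => (f b, x0 b)) (f a, x0 a)) :=
    (sum_comp_cnt (fun a => (f a, x0 a))
      (fun v => Real.log (cnt (fun a => (f a, x0 a)) v))).symm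
  have hsumf : (∑ i : ι, ((cnt f i : ℝ))) = (n : ℝ) := by
    rw [← Nat.cast_sum]
    exact_mod_cast congrArg (Nat.cast (R := ℝ)) (sum_cnt f)
  have hsum0 : (∑ v : ι × X, ((cnt (fun a => (f a, x0 a)) v : ℝ))) = (n : ℝ) := by
    rw [← Nat.cast_sum]
    exact_mod_cast congrArg (Nat.cast (R := ℝ)) (sum_cnt (fun a => (f a, x0 a)))
  -- lower bound for the numerator
  have hlow : Real.exp ((∑ a, Real.log (cnt f (f a))) - n)
      ≤ ∏ i : ι, (Nat.factorial (cnt f i) : ℝ) := by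
    calc Real.exp ((∑ a, Real.log (cnt f (f a))) - n)
        = ∏ i : ι, Real.exp ((cnt f i : ℝ) * Real.log (cnt f i) - cnt f i) := by
          rw [← Real.exp_sum, Finset.sum_sub_distrib, hLf, hsumf]
      _ ≤ ∏ i : ι, (Nat.factorial (cnt f i) : ℝ) := by
          apply Finset.prod_le_prod (fun i _ => (Real.exp_pos _).le)
            (fun i _ => factorial_lower (cnt f i))
  -- upper bound for the denominator
  have hup : ∏ v : ι × X, (Nat.factorial (cnt (fun a => (f a, x0 a)) v) : ℝ)
      ≤ ((n : ℝ) + 1) ^ (3 * (Fintype.card ι * Fintype.card X))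
        * Real.exp ((∑ a, Real.log (cnt (fun b => (f b, x0 b)) (f a, x0 a))) - n) := by
    have hfac : ∀ v : ι × X, (Nat.factorial (cnt (fun a => (f a, x0 a)) v) : ℝ)
        ≤ ((n : ℝ) + 1) ^ 3 * Real.exp ((cnt (fun a => (f a, x0 a)) v : ℝ)
            * Real.log (cnt (fun a => (f a, x0 a)) v) - cnt (fun a => (f a, x0 a)) v) := by
      intro v
      refine le_trans (factorial_upper _) ?_
      apply mul_le_mul_of_nonneg_right ?_ (Real.exp_pos _).le
      have h1 : ((cnt (fun a => (f a, x0 a)) v : ℝ) + 1) ≤ (n : ℝ) + 1 := by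
        have := cnt_le (fun a => (f a, x0 a)) v
        have : (cnt (fun a => (f a, x0 a)) v : ℝ) ≤ (n : ℝ) := by exact_mod_cast this
        linarith
      have h2 : Real.exp 1 ≤ ((n : ℝ) + 1) ^ 2 := by
        have hn1 : (2 : ℝ) ≤ (n : ℝ) + 1 := by
          have : (1 : ℝ) ≤ (n : ℝ) := by exact_mod_cast hα
          linarith
        have : (4 : ℝ) ≤ ((n : ℝ) + 1) ^ 2 := by nlinarith
        have he : Real.exp 1 < 3 := by
          have := Real.exp_one_lt_d9
          linarith
        linarith
      calc Real.exp 1 * ((cnt (fun a => (f a, x0 a)) v : ℝ) + 1)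
          ≤ ((n : ℝ) + 1) ^ 2 * ((n : ℝ) + 1) := by
            apply mul_le_mul h2 h1 (by positivity) (by positivity)
        _ = ((n : ℝ) + 1) ^ 3 := by ring
    calc ∏ v : ι × X, (Nat.factorial (cnt (fun a => (f a, x0 a)) v) : ℝ)
        ≤ ∏ v : ι × X, (((n : ℝ) + 1) ^ 3
            * Real.exp ((cnt (fun a => (f a, x0 a)) v : ℝ)
              * Real.log (cnt (fun a => (f a, x0 a)) v) - cnt (fun a => (f a, x0 a)) v)) := by
          apply Finset.prod_le_prod (fun v _ => by positivity) (fun v _ => hfac v)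
      _ = ((n : ℝ) + 1) ^ (3 * (Fintype.card ι * Fintype.card X))
            * Real.exp ((∑ a, Real.log (cnt (fun b => (f b, x0 b)) (f a, x0 a))) - n) := by
          rw [Finset.prod_mul_distrib, Finset.prod_const, ← Real.exp_sum,
            Finset.sum_sub_distrib, hL0, hsum0, ← pow_mul, Finset.card_univ, Fintype.card_prod]
  -- combine
  have hcomb : Real.exp ((∑ a, Real.log (cnt f (f a))) - n)
      ≤ (s : ℝ) * (((n : ℝ) + 1) ^ (3 * (Fintype.card ι * Fintype.card X))
        * Real.exp ((∑ a, Real.log (cnt (fun b => (f b, x0 b)) (f a, x0 a))) - n)) := by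
    rw [← hkey] at hlow
    refine le_trans hlow ?_
    exact mul_le_mul_of_nonneg_left hup (Nat.cast_nonneg s)
  have := mul_le_mul_of_nonneg_right hcomb
    (Real.exp_pos ((n:ℝ) - ∑ a, Real.log (cnt (fun b => (f b, x0 b)) (f a, x0 a)))).le
  calc Real.exp ((∑ a, Real.log (cnt f (f a)))
        - ∑ a, Real.log (cnt (fun b => (f b, x0 b)) (f a, x0 a)))
      = Real.exp ((∑ a, Real.log (cnt f (f a))) - n)
        * Real.exp ((n:ℝ) - ∑ a, Real.log (cnt (fun b => (f b, x0 b)) (f a, x0 a))) := by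
        rw [← Real.exp_add]; ring_nf
    _ ≤ (s : ℝ) * (((n : ℝ) + 1) ^ (3 * (Fintype.card ι * Fintype.card X))
          * Real.exp ((∑ a, Real.log (cnt (fun b => (f b, x0 b)) (f a, x0 a))) - n))
        * Real.exp ((n:ℝ) - ∑ a, Real.log (cnt (fun b => (f b, x0 b)) (f a, x0 a))) := this
    _ = (s : ℝ) * ((n : ℝ) + 1) ^ (3 * (Fintype.card ι * Fintype.card X)) := by
        rw [mul_assoc, mul_assoc, ← Real.exp_add]
        have h9 : (∑ a, Real.log (cnt (fun b => (f b, x0 b)) (f a, x0 a))) - (n:ℝ)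
            + ((n:ℝ) - ∑ a, Real.log (cnt (fun b => (f b, x0 b)) (f a, x0 a))) = 0 := by ring
        rw [h9, Real.exp_zero, mul_one]

end AuxCounting

theorem stmt7 (U X Y : Type) [Fintype U] [Fintype X] [Fintype Y]
    [DecidableEq U] [DecidableEq X] [DecidableEq Y] :
    ∃ c : ℕ, ∀ n : ℕ, 0 < n →
      ∀ P : U × X → ℝ, IsDist P → IsTypeDen n P →
      ∀ u : Fin n → U, empDist u = PU P →
      ∀ (y : Fin n → Y) (t : ℝ),
        (∑ x : Fin n → X, unifShell n P u x * ind (empMI (fun i => (u i, x i)) y ≥ t))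
          ≤ (n + 1 : ℝ) ^ c * Real.exp (-(n : ℝ) * (t - empMI u y)) := by
  classical
  refine ⟨Fintype.card U * Fintype.card Y * Fintype.card X
    + 3 * (Fintype.card U * Fintype.card X), ?_⟩
  intro n hn P hPd hPt u hu y t
  set S : Finset (Fin n → X) :=
    Finset.univ.filter (fun x : Fin n → X => empDist (fun i => (u i, x i)) = P) with hS
  have hshellCard : shellCard n P u = S.card := by
    rw [shellCard, Nat.card_eq_fintype_card, Fintype.card_subtype]
  have hterm : ∀ x : Fin n → X,
      unifShell n P u x * ind (empMI (fun i => (u i, x i)) y ≥ t)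
      = if x ∈ S then (S.card : ℝ)⁻¹ * ind (empMI (fun i => (u i, x i)) y ≥ t) else 0 := by
    intro x
    by_cases h : empDist (fun i => (u i, x i)) = P
    · rw [unifShell, if_pos h, hshellCard,
        if_pos (show x ∈ S from Finset.mem_filter.mpr ⟨Finset.mem_univ x, h⟩)]
    · rw [unifShell, if_neg h, zero_mul,
        if_neg (show ¬ (x ∈ S) from fun hmem => h (Finset.mem_filter.mp hmem).2)]
  rw [Finset.sum_congr rfl (fun x _ => hterm x), Finset.sum_ite_mem, Finset.univ_inter]
  rcases Finset.eq_empty_or_nonempty S with hS0 | hSne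
  · rw [hS0, Finset.sum_empty]
    positivity
  set κ : (Fin n → X) → ((U × Y) × X → ℕ) :=
    fun x v => cnt (fun i => ((u i, y i), x i)) v with hκ
  have hfibs := Finset.sum_fiberwise_of_maps_to (s := S) (t := S.image κ) (g := κ)
    (fun x hx => Finset.mem_image_of_mem κ hx)
    (fun x => (S.card : ℝ)⁻¹ * ind (empMI (fun i => (u i, x i)) y ≥ t))
  rw [← hfibs]
  have hScard : (0:ℝ) < S.card := by exact_mod_cast Finset.card_pos.mpr hSne
  have hperfiber : ∀ k ∈ S.image κ,
      (∑ x ∈ S.filter (fun x => κ x = k),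
        (S.card : ℝ)⁻¹ * ind (empMI (fun i => (u i, x i)) y ≥ t))
      ≤ ((n:ℝ) + 1) ^ (3 * (Fintype.card U * Fintype.card X))
          * Real.exp (-(n : ℝ) * (t - empMI u y)) := by
    intro k hk
    obtain ⟨x0, hx0S, hx0k⟩ := Finset.mem_image.mp hk
    have hMIconst : ∀ x ∈ S.filter (fun x => κ x = k),
        empMI (fun i => (u i, x i)) y = empMI (fun i => (u i, x0 i)) y := by
      intro x hx
      have hxk : κ x = κ x0 := by rw [(Finset.mem_filter.mp hx).2, hx0k]
      unfold empMI
      congr 1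
      funext p
      obtain ⟨⟨a, b⟩, c⟩ := p
      show ((Finset.univ.filter (fun i => ((u i, x i), y i) = ((a, b), c))).card : ℝ) / n
        = ((Finset.univ.filter (fun i => ((u i, x0 i), y i) = ((a, b), c))).card : ℝ) / n
      have e1 : (Finset.univ.filter (fun i => ((u i, x i), y i) = ((a, b), c))).card
          = κ x ((a, c), b) := cnt_rot u x y a b c
      have e2 : (Finset.univ.filter (fun i => ((u i, x0 i), y i) = ((a, b), c))).card
          = κ x0 ((a, c), b) := cnt_rot u x0 y a b c
      rw [e1, e2, hxk]
    have hindeq : ∀ x ∈ S.filter (fun x => κ x = k),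
        (S.card : ℝ)⁻¹ * ind (empMI (fun i => (u i, x i)) y ≥ t)
        = (S.card : ℝ)⁻¹ * ind (empMI (fun i => (u i, x0 i)) y ≥ t) := by
      intro x hx
      rw [hMIconst x hx]
    rw [Finset.sum_congr rfl hindeq, Finset.sum_const, nsmul_eq_mul]
    by_cases hind : empMI (fun i => (u i, x0 i)) y ≥ t
    · -- main case
      have hind1 : ind (empMI (fun i => (u i, x0 i)) y ≥ t) = 1 := by
        unfold ind; rw [if_pos hind]
      rw [hind1, mul_one]
      -- class (fiber) upper bound
      have hsub : S.filter (fun x => κ x = k) ⊆ Finset.univ.filter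
          (fun x : Fin n → X => ∀ v : (U × Y) × X,
            cnt (fun i => ((u i, y i), x i)) v = cnt (fun i => ((u i, y i), x0 i)) v) := by
        intro x hx
        obtain ⟨hxS, hxk⟩ := Finset.mem_filter.mp hx
        refine Finset.mem_filter.mpr ⟨Finset.mem_univ _, fun v => ?_⟩
        show κ x v = κ x0 v
        rw [hxk, hx0k]
      have hclass : ((S.filter (fun x => κ x = k)).card : ℝ)
          ≤ Real.exp ((∑ i, Real.log (cnt (fun j => (u j, y j)) (u i, y i)))
              - ∑ i, Real.log (cnt (fun j => ((u j, y j), x0 j)) ((u i, y i), x0 i))) := by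
        refine le_trans ?_ (class_card_le (fun i => (u i, y i)) x0)
        exact_mod_cast Finset.card_le_card hsub
      -- shell lower bound
      have hx0P : empDist (fun i => (u i, x0 i)) = P := (Finset.mem_filter.mp hx0S).2
      have hnne : ((n:ℝ)) ≠ 0 := by
        have : (0:ℝ) < n := by exact_mod_cast hn
        exact this.ne'
      have hSrepr : S = Finset.univ.filter (fun x : Fin n → X =>
          ∀ v : U × X, cnt (fun i => (u i, x i)) v = cnt (fun i => (u i, x0 i)) v) := by
        ext x
        simp only [hS, Finset.mem_filter, Finset.mem_univ, true_and]
        constructor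
        · intro hx v
          have hcast : ((cnt (fun i => (u i, x i)) v : ℝ)) / n
              = ((cnt (fun i => (u i, x0 i)) v : ℝ)) / n := by
            show empDist (fun i => (u i, x i)) v = empDist (fun i => (u i, x0 i)) v
            rw [hx, hx0P]
          field_simp at hcast
          exact_mod_cast hcast
        · intro hx
          rw [← hx0P]
          funext v
          show ((cnt (fun i => (u i, x i)) v : ℝ)) / n
            = ((cnt (fun i => (u i, x0 i)) v : ℝ)) / n
          rw [hx v]
      have hshellge : Real.exp ((∑ i, Real.log (cnt u (u i)))
            - ∑ i, Real.log (cnt (fun j => (u j, x0 j)) (u i, x0 i)))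
          ≤ (S.card : ℝ) * ((n:ℝ) + 1) ^ (3 * (Fintype.card U * Fintype.card X)) := by
        have h := shell_card_ge (α := Fin n)
          (by rw [Fintype.card_fin]; exact hn) u x0
        rw [Fintype.card_fin] at h
        rw [hSrepr]
        exact h
      -- mutual information identities
      have hMIb : (n:ℝ) * empMI (fun i => (u i, x0 i)) y
          = (∑ i, Real.log (cnt (fun j => ((u j, x0 j), y j)) ((u i, x0 i), y i)))
              + n * Real.log n
            - (∑ i, Real.log (cnt (fun j => (u j, x0 j)) (u i, x0 i)))
            - ∑ i, Real.log (cnt y (y i)) := empMI_eq hn (fun i => (u i, x0 i)) y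
      have hMIs : (n:ℝ) * empMI u y
          = (∑ i, Real.log (cnt (fun j => (u j, y j)) (u i, y i))) + n * Real.log n
            - (∑ i, Real.log (cnt u (u i)))
            - ∑ i, Real.log (cnt y (y i)) := empMI_eq hn u y
      have hLL : (∑ i, Real.log (cnt (fun j => ((u j, x0 j), y j)) ((u i, x0 i), y i)))
          = ∑ i, Real.log (cnt (fun j => ((u j, y j), x0 j)) ((u i, y i), x0 i)) :=
        Finset.sum_congr rfl fun i _ => by rw [cnt_rot u x0 y (u i) (x0 i) (y i)]
      -- exponent comparison
      have h1 : -(n:ℝ) * (empMI (fun i => (u i, x0 i)) y - empMI u y)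
          = ((∑ i, Real.log (cnt (fun j => (u j, y j)) (u i, y i)))
              - ∑ i, Real.log (cnt (fun j => ((u j, y j), x0 j)) ((u i, y i), x0 i)))
            + ((∑ i, Real.log (cnt (fun j => (u j, x0 j)) (u i, x0 i)))
              - ∑ i, Real.log (cnt u (u i))) := by
        rw [← hLL]
        nlinarith [hMIb, hMIs]
      have h2 : Real.exp (-(n:ℝ) * (empMI (fun i => (u i, x0 i)) y - empMI u y))
          ≤ Real.exp (-(n:ℝ) * (t - empMI u y)) := by
        apply Real.exp_le_exp.mpr
        have hnn : (0:ℝ) ≤ n := Nat.cast_nonneg n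
        nlinarith [hind]
      have hexp : Real.exp ((∑ i, Real.log (cnt (fun j => (u j, y j)) (u i, y i)))
            - ∑ i, Real.log (cnt (fun j => ((u j, y j), x0 j)) ((u i, y i), x0 i)))
          ≤ (S.card : ℝ) * (((n:ℝ) + 1) ^ (3 * (Fintype.card U * Fintype.card X))
              * Real.exp (-(n : ℝ) * (t - empMI u y))) := by
        calc Real.exp ((∑ i, Real.log (cnt (fun j => (u j, y j)) (u i, y i)))
              - ∑ i, Real.log (cnt (fun j => ((u j, y j), x0 j)) ((u i, y i), x0 i)))
            = Real.exp ((∑ i, Real.log (cnt u (u i)))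
                - ∑ i, Real.log (cnt (fun j => (u j, x0 j)) (u i, x0 i)))
              * Real.exp (-(n:ℝ) * (empMI (fun i => (u i, x0 i)) y - empMI u y)) := by
              rw [h1, ← Real.exp_add]
              congr 1
              ring
          _ ≤ ((S.card : ℝ) * ((n:ℝ) + 1) ^ (3 * (Fintype.card U * Fintype.card X)))
                * Real.exp (-(n : ℝ) * (t - empMI u y)) := by
              apply mul_le_mul hshellge h2 (Real.exp_pos _).le
              positivity
          _ = (S.card : ℝ) * (((n:ℝ) + 1) ^ (3 * (Fintype.card U * Fintype.card X))
                * Real.exp (-(n : ℝ) * (t - empMI u y))) := by ring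
      calc ((S.filter (fun x => κ x = k)).card : ℝ) * (S.card : ℝ)⁻¹
          ≤ ((S.card : ℝ) * (((n:ℝ) + 1) ^ (3 * (Fintype.card U * Fintype.card X))
              * Real.exp (-(n : ℝ) * (t - empMI u y)))) * (S.card : ℝ)⁻¹ := by
            apply mul_le_mul_of_nonneg_right (le_trans hclass hexp)
            positivity
        _ = ((n:ℝ) + 1) ^ (3 * (Fintype.card U * Fintype.card X))
              * Real.exp (-(n : ℝ) * (t - empMI u y)) := by
            rw [mul_comm (S.card : ℝ), mul_assoc, mul_inv_cancel₀ hScard.ne', mul_one]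
    · -- the indicator vanishes
      have hind0 : ind (empMI (fun i => (u i, x0 i)) y ≥ t) = 0 := by
        unfold ind; rw [if_neg hind]
      rw [hind0, mul_zero, mul_zero]
      positivity
  -- sum over the (few) fibers
  have himg : ((S.image κ).card : ℝ)
      ≤ ((n:ℝ) + 1) ^ (Fintype.card U * Fintype.card Y * Fintype.card X) := by
    have hb : ∀ k ∈ S.image κ, ∀ v, k v ≤ n := by
      intro k hk v
      obtain ⟨x, -, rfl⟩ := Finset.mem_image.mp hk
      exact le_trans (cnt_le _ v) (le_of_eq (Fintype.card_fin n))
    have hcard : (S.image κ).card ≤ Fintype.card ((U × Y) × X → Fin (n+1)) := by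
      rw [← Finset.card_univ]
      apply Finset.card_le_card_of_injOn
        (fun k => fun v => Fin.ofNat (n+1) (k v)) (fun k _ => Finset.mem_univ _)
      intro k1 h1 k2 h2 he
      funext v
      have hv1 : k1 v < n+1 := Nat.lt_succ_of_le (hb k1 h1 v)
      have hv2 : k2 v < n+1 := Nat.lt_succ_of_le (hb k2 h2 v)
      have hev := congrArg Fin.val (congrFun he v)
      rwa [Fin.val_ofNat, Fin.val_ofNat, Nat.mod_eq_of_lt hv1, Nat.mod_eq_of_lt hv2] at hev
    have hcard2 : Fintype.card ((U × Y) × X → Fin (n+1))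
        = (n+1) ^ (Fintype.card U * Fintype.card Y * Fintype.card X) := by
      rw [Fintype.card_fun, Fintype.card_fin, Fintype.card_prod, Fintype.card_prod]
    rw [hcard2] at hcard
    have := (Nat.cast_le (α := ℝ)).mpr hcard
    refine le_trans this ?_
    push_cast
    exact le_rfl
  calc (∑ k ∈ S.image κ, ∑ x ∈ S.filter (fun x => κ x = k),
        (S.card : ℝ)⁻¹ * ind (empMI (fun i => (u i, x i)) y ≥ t))
      ≤ ∑ _k ∈ S.image κ, ((n:ℝ) + 1) ^ (3 * (Fintype.card U * Fintype.card X))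
          * Real.exp (-(n : ℝ) * (t - empMI u y)) := Finset.sum_le_sum hperfiber
    _ = ((S.image κ).card : ℝ) * (((n:ℝ) + 1) ^ (3 * (Fintype.card U * Fintype.card X))
          * Real.exp (-(n : ℝ) * (t - empMI u y))) := by
        rw [Finset.sum_const, nsmul_eq_mul]
    _ ≤ ((n:ℝ) + 1) ^ (Fintype.card U * Fintype.card Y * Fintype.card X)
          * (((n:ℝ) + 1) ^ (3 * (Fintype.card U * Fintype.card X))
            * Real.exp (-(n : ℝ) * (t - empMI u y))) := by
        apply mul_le_mul_of_nonneg_right himg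
        positivity
    _ = ((n:ℝ) + 1) ^ (Fintype.card U * Fintype.card Y * Fintype.card X
          + 3 * (Fintype.card U * Fintype.card X))
          * Real.exp (-(n : ℝ) * (t - empMI u y)) := by
        rw [pow_add]
        ring
end

section
/- Fix a blocklength n, a joint type P_UX with denominator n on U×X, a pair (u, x) ∈ Uⁿ × Xⁿ of joint type P_UX, and R ≥ 0. Let Y ∈ Yⁿ be random with distribution W_Y^n(·|x) := Π_{i=1}^n W_Y(·|x_i). Then Pr[Î((u,x) ∧ Y) ≤ R] ≤ (n+1)^c · exp(−n·E_sp(R)), for a constant c depending only on |U|, |X|, |Y|, where E_sp is the sphere-packing exponent for the parameters (P_UX, W_Y). -/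
open scoped BigOperators ENNReal

section AuxProof

open Finset

lemma auxA {I A : Type*} [Fintype I] [Fintype A] [DecidableEq A] (g : I → A) (f : A → ℝ) :
    ∏ i, f (g i) = ∏ a, f a ^ (Finset.univ.filter (fun i => g i = a)).card := by
  rw [← Finset.prod_fiberwise_of_maps_to (g := g) (fun i _ => Finset.mem_univ (g i))
    (fun i => f (g i))]
  refine Finset.prod_congr rfl fun a _ => ?_
  rw [Finset.prod_congr rfl (fun i hi => by rw [(Finset.mem_filter.1 hi).2]), Finset.prod_const]

lemma auxB {I A B : Type*} [Fintype I] [Fintype B] [DecidableEq A] [DecidableEq B]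
    (g : I → A) (h : I → B) (a : A) :
    (Finset.univ.filter (fun i => g i = a)).card
      = ∑ b, (Finset.univ.filter (fun i => (g i, h i) = (a, b))).card := by
  rw [Finset.card_eq_sum_card_fiberwise (f := h) (t := Finset.univ) (fun i _ => Finset.mem_univ _)]
  refine Finset.sum_congr rfl fun b _ => ?_
  congr 1
  rw [Finset.filter_filter]
  exact Finset.filter_congr fun i _ => by simp [Prod.ext_iff, and_comm]

lemma auxC {ι : Type*} (s : Finset ι) (f : ι → ℝ) :
    ((∑ i ∈ s, f i : ℝ) : EReal) = ∑ i ∈ s, (f i : EReal) :=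
  map_sum (⟨⟨Real.toEReal, EReal.coe_zero⟩, EReal.coe_add⟩ : ℝ →+ EReal) f s

lemma auxD (n : ℕ) (a b : EReal) (h : a ≤ b) :
    (-(n : ℝ) : EReal) * b ≤ (-(n : ℝ) : EReal) * a := by
  rw [EReal.neg_mul, EReal.neg_mul, EReal.neg_le_neg_iff]
  exact mul_le_mul_of_nonneg_left h (by exact_mod_cast EReal.coe_nonneg.2 (Nat.cast_nonneg n))

/-- joint count -/
def jct {n : ℕ} {A : Type*} [DecidableEq A] (g : Fin n → A) (a : A) : ℕ :=
  (Finset.univ.filter (fun i => g i = a)).card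

lemma jct_le {n : ℕ} {A : Type*} [DecidableEq A] (g : Fin n → A) (a : A) : jct g a ≤ n :=
  le_trans (Finset.card_filter_le _ _) (by simp)

lemma ind_nonneg (p : Prop) : 0 ≤ ind p := by unfold ind; split <;> norm_num

lemma ind_le_one (p : Prop) : ind p ≤ 1 := by unfold ind; split <;> norm_num

lemma chansum {A Y : Type*} [Fintype A] [Fintype Y] {n : ℕ}
    (V : A → Y → ℝ) (hV : IsChannel V) (z : Fin n → A) :
    ∑ y : Fin n → Y, ∏ i, V (z i) (y i) = 1 := by
  classical
  have h := Finset.prod_univ_sum (fun _ : Fin n => (Finset.univ : Finset Y))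
    (fun i b => V (z i) b)
  rw [Fintype.piFinset_univ] at h
  rw [← h]
  simp [hV.2]

lemma fiberBound {U X Y : Type} [Fintype U] [Fintype X] [Fintype Y]
    [DecidableEq U] [DecidableEq X] [DecidableEq Y]
    {n : ℕ} (hn : 0 < n) (W_Y : X → Y → ℝ) (hW : IsChannel W_Y)
    (P : U × X → ℝ) (hP : IsDist P)
    (z : Fin n → U × X) (x : Fin n → X) (hz2 : ∀ i, (z i).2 = x i)
    (hux : empDist z = P)
    (R : ℝ) (ys : Y) (y₀ : Fin n → Y) (hy₀R : empMI z y₀ ≤ R)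
    (F : Finset (Fin n → Y))
    (hF : ∀ y ∈ F, ∀ p, jct (fun i => (z i, y i)) p = jct (fun i => (z i, y₀ i)) p) :
    ∑ y ∈ F, ENNReal.ofReal (Wn W_Y x y * ind (empMI z y ≤ R))
      ≤ EReal.exp ((-(n : ℝ) : EReal) * Esp P W_Y R) := by
  classical
  have hnR : (0 : ℝ) < n := by exact_mod_cast hn
  have hWnn : ∀ y : Fin n → Y, 0 ≤ Wn W_Y x y :=
    fun y => Finset.prod_nonneg fun i _ => hW.1 _ _
  set Q : (U × X) × Y → ℝ := empDist (fun i => (z i, y₀ i)) with hQdef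
  have hQ : ∀ p, Q p = (jct (fun i => (z i, y₀ i)) p : ℝ) / n := fun p => rfl
  have hQnn : ∀ p, 0 ≤ Q p := fun p => by rw [hQ]; positivity
  have hQ0iff : ∀ p, Q p = 0 ↔ jct (fun i => (z i, y₀ i)) p = 0 := by
    intro p
    rw [hQ p, div_eq_zero_iff]
    constructor
    · rintro (h | h)
      · exact_mod_cast h
      · exact absurd h (ne_of_gt hnR)
    · intro h; exact Or.inl (by exact_mod_cast h)
  have hmarg : ∀ a, ∑ b, Q (a, b) = P a := by
    intro a
    have h1 : (Finset.univ.filter (fun i => z i = a)).card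
        = ∑ b, jct (fun i => (z i, y₀ i)) (a, b) := auxB z y₀ a
    calc ∑ b, Q (a, b) = (∑ b, (jct (fun i => (z i, y₀ i)) (a, b) : ℝ)) / n := by
          rw [Finset.sum_div]; exact Finset.sum_congr rfl fun b _ => hQ (a, b)
      _ = (((Finset.univ.filter (fun i => z i = a)).card : ℝ)) / n := by
          rw [h1]; push_cast; ring
      _ = P a := by rw [← hux]; rfl
  have hQP0 : ∀ a b, P a = 0 → Q (a, b) = 0 := by
    intro a b h
    have hsum : ∑ b, Q (a, b) = 0 := by rw [hmarg a, h]
    exact (Finset.sum_eq_zero_iff_of_nonneg (fun b _ => hQnn (a, b))).1 hsum b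
      (Finset.mem_univ b)
  set V : U × X → Y → ℝ :=
    fun a b => if P a = 0 then (if b = ys then 1 else 0) else Q (a, b) / P a with hVdef
  have hVnn : ∀ a b, 0 ≤ V a b := by
    intro a b
    by_cases h : P a = 0
    · simp only [hVdef, if_pos h]; split <;> norm_num
    · simp only [hVdef, if_neg h]
      exact div_nonneg (hQnn _) (hP.1 a)
  have hVch : IsChannel V := by
    refine ⟨hVnn, fun a => ?_⟩
    by_cases h : P a = 0
    · simp [hVdef, h]
    · simp only [hVdef, if_neg h]
      rw [← Finset.sum_div, hmarg a, div_self h]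
  have hQeq : ∀ p : (U × X) × Y, P p.1 * V p.1 p.2 = Q p := by
    rintro ⟨a, b⟩
    by_cases h : P a = 0
    · simp [hVdef, h, hQP0 a b h]
    · simp only [hVdef, if_neg h]
      field_simp
  have hMI : chMI P V ≤ R := by
    have h1 : chMI P V = empMI z y₀ := by
      show mutInf (fun p : (U × X) × Y => P p.1 * V p.1 p.2)
        = mutInf (empDist (fun i => (z i, y₀ i)))
      congr 1
      funext p
      rw [hQeq p]
    rw [h1]; exact hy₀R
  by_cases hzero : ∃ p : (U × X) × Y, jct (fun i => (z i, y₀ i)) p ≠ 0 ∧ W_Y p.1.2 p.2 = 0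
  · -- degenerate case: some zero W on the support, every term vanishes
    obtain ⟨p, hp, hWp⟩ := hzero
    rw [Finset.sum_eq_zero]
    · exact zero_le
    intro y hy
    have hc : jct (fun i => (z i, y i)) p ≠ 0 := by rw [hF y hy p]; exact hp
    have hne : (Finset.univ.filter (fun i => (z i, y i) = p)).Nonempty :=
      Finset.card_pos.1 (Nat.pos_of_ne_zero hc)
    obtain ⟨i, hi⟩ := hne
    have hip : (z i, y i) = p := (Finset.mem_filter.1 hi).2
    have h1 : z i = p.1 := by rw [← hip]
    have h2 : y i = p.2 := by rw [← hip]
    have hWn0 : Wn W_Y x y = 0 := by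
      apply Finset.prod_eq_zero (Finset.mem_univ i)
      rw [← hz2 i, h1, h2]
      exact hWp
    rw [hWn0, zero_mul, ENNReal.ofReal_zero]
  · push_neg at hzero
    set S : Finset ((U × X) × Y) :=
      Finset.univ.filter (fun p => jct (fun i => (z i, y₀ i)) p ≠ 0) with hSdef
    have hmemS : ∀ p, p ∈ S ↔ jct (fun i => (z i, y₀ i)) p ≠ 0 := by
      intro p; rw [hSdef, Finset.mem_filter]; simp
    have hQposS : ∀ p ∈ S, 0 < Q p := by
      intro p hp
      exact lt_of_le_of_ne (hQnn p)
        (fun h => ((hmemS p).1 hp) ((hQ0iff p).1 h.symm))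
    have hPposS : ∀ p ∈ S, 0 < P p.1 := by
      intro p hp
      have h1 : Q p ≤ P p.1 := by
        rw [← hmarg p.1]
        have := Finset.single_le_sum (f := fun b => Q (p.1, b))
          (fun b _ => hQnn _) (Finset.mem_univ p.2)
        simpa using this
      exact lt_of_lt_of_le (hQposS p hp) h1
    have hVQ : ∀ p ∈ S, V p.1 p.2 = Q p / P p.1 := by
      intro p hp
      simp only [hVdef]
      rw [if_neg (ne_of_gt (hPposS p hp)), Prod.mk.eta]
    have hVposS : ∀ p ∈ S, 0 < V p.1 p.2 := fun p hp => by
      rw [hVQ p hp]; exact div_pos (hQposS p hp) (hPposS p hp)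
    have hWposS : ∀ p ∈ S, 0 < W_Y p.1.2 p.2 := fun p hp =>
      lt_of_le_of_ne (hW.1 _ _) (Ne.symm (hzero p ((hmemS p).1 hp)))
    set Dr : ℝ := ∑ p ∈ S, Q p * Real.log (V p.1 p.2 / W_Y p.1.2 p.2) with hDr
    -- condKL equals Dr
    have hcond : condKL P V (Wuxy W_Y) = (Dr : EReal) := by
      have hterm : ∀ p : (U × X) × Y,
          (if P p.1 * V p.1 p.2 = 0 then (0 : EReal)
            else if Wuxy W_Y p.1 p.2 = 0 then ⊤
            else ((P p.1 * V p.1 p.2 * Real.log (V p.1 p.2 / Wuxy W_Y p.1 p.2) : ℝ) : EReal))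
          = (((if p ∈ S then Q p * Real.log (V p.1 p.2 / W_Y p.1.2 p.2) else 0) : ℝ) : EReal) := by
        intro p
        rw [hQeq p]
        by_cases h : Q p = 0
        · have : p ∉ S := fun hc => (ne_of_gt (hQposS p hc)) h
          rw [if_pos h, if_neg this]
          simp
        · have hpS : p ∈ S := (hmemS p).2 (fun hc => h ((hQ0iff p).2 hc))
          rw [if_neg h, if_pos hpS]
          have hWne : Wuxy W_Y p.1 p.2 ≠ 0 := ne_of_gt (hWposS p hpS)
          rw [if_neg hWne]
          rfl
      calc condKL P V (Wuxy W_Y)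
          = ∑ a : U × X, ∑ b : Y,
              (((if (a, b) ∈ S then Q (a, b) * Real.log (V a b / W_Y a.2 b) else 0) : ℝ) : EReal) := by
            unfold condKL
            exact Finset.sum_congr rfl fun a _ => Finset.sum_congr rfl fun b _ => hterm (a, b)
        _ = ((∑ a : U × X, ∑ b : Y,
              (if (a, b) ∈ S then Q (a, b) * Real.log (V a b / W_Y a.2 b) else 0) : ℝ) : EReal) := by
            rw [auxC]
            exact Finset.sum_congr rfl fun a _ => (auxC _ _).symm
        _ = (Dr : EReal) := by
            norm_cast
            have h2 : ∑ a : U × X, ∑ b : Y,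
                (if (a, b) ∈ S then Q (a, b) * Real.log (V a b / W_Y a.2 b) else 0)
                = ∑ p : (U × X) × Y,
                    (if p ∈ S then Q p * Real.log (V p.1 p.2 / W_Y p.1.2 p.2) else 0) :=
              (Fintype.sum_prod_type (f := fun p : (U × X) × Y =>
                if p ∈ S then Q p * Real.log (V p.1 p.2 / W_Y p.1.2 p.2) else 0)).symm
            rw [h2, Finset.sum_ite_mem, Finset.univ_inter, hDr]
      
    have hEsp : Esp P W_Y R ≤ (Dr : EReal) := by
      rw [← hcond]
      exact iInf_le (fun V : {V : U × X → Y → ℝ // IsChannel V ∧ chMI P V ≤ R} =>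
        condKL P V.1 (Wuxy W_Y)) ⟨V, hVch, hMI⟩
    -- exponent rewriting
    have hnDr : -(n : ℝ) * Dr
        = ∑ p ∈ S, (jct (fun i => (z i, y₀ i)) p : ℝ)
            * Real.log (W_Y p.1.2 p.2 / V p.1 p.2) := by
      rw [hDr, Finset.mul_sum]
      refine Finset.sum_congr rfl fun p hp => ?_
      rw [hQ p]
      have h1 : -(n : ℝ) * ((jct (fun i => (z i, y₀ i)) p : ℝ) / n
            * Real.log (V p.1 p.2 / W_Y p.1.2 p.2))
          = (jct (fun i => (z i, y₀ i)) p : ℝ)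
            * (- Real.log (V p.1 p.2 / W_Y p.1.2 p.2)) := by
        field_simp
      rw [h1, ← Real.log_inv, inv_div]
    have hexp : Real.exp (-(n : ℝ) * Dr)
        = ∏ p ∈ S, (W_Y p.1.2 p.2 / V p.1 p.2) ^ (jct (fun i => (z i, y₀ i)) p) := by
      rw [hnDr, Real.exp_sum]
      refine Finset.prod_congr rfl fun p hp => ?_
      rw [Real.exp_nat_mul, Real.exp_log (div_pos (hWposS p hp) (hVposS p hp))]
    -- product identities on the fiber
    have hgen : ∀ (f : (U × X) × Y → ℝ) (y : Fin n → Y), (∀ i, f (z i, y i) = f (z i, y i)) →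
        True := fun _ _ _ => trivial
    have hprodgen : ∀ (f : (U × X) × Y → ℝ), ∀ y ∈ F,
        ∏ i, f (z i, y i) = ∏ p ∈ S, f p ^ (jct (fun i => (z i, y₀ i)) p) := by
      intro f y hy
      have h0 : ∏ i, f (z i, y i)
          = ∏ p : (U × X) × Y, f p ^ (Finset.univ.filter (fun i => (z i, y i) = p)).card :=
        auxA (fun j => (z j, y j)) f
      rw [h0]
      have hcard : ∀ p : (U × X) × Y,
          (Finset.univ.filter (fun i => (z i, y i) = p)).card
            = jct (fun i => (z i, y₀ i)) p := fun p => hF y hy p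
      rw [Finset.prod_congr rfl (fun p _ => by rw [hcard p])]
      refine (Finset.prod_subset (Finset.filter_subset _ _) ?_).symm
      intro p _ hp
      have h0 : jct (fun i => (z i, y₀ i)) p = 0 := by
        by_contra hc
        exact hp ((hmemS p).2 hc)
      rw [h0, pow_zero]
    have hkeyEq : ∀ y ∈ F,
        Wn W_Y x y = (∏ i, V (z i) (y i)) * Real.exp (-(n : ℝ) * Dr) := by
      intro y hy
      have hWp : Wn W_Y x y
          = ∏ p ∈ S, W_Y p.1.2 p.2 ^ (jct (fun i => (z i, y₀ i)) p) := by
        calc Wn W_Y x y = ∏ i, W_Y (z i).2 (y i) :=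
              Finset.prod_congr rfl fun i _ => by rw [hz2 i]
          _ = ∏ p ∈ S, W_Y p.1.2 p.2 ^ (jct (fun i => (z i, y₀ i)) p) :=
              hprodgen (fun p : (U × X) × Y => W_Y p.1.2 p.2) y hy
      have hVp : (∏ i, V (z i) (y i))
          = ∏ p ∈ S, V p.1 p.2 ^ (jct (fun i => (z i, y₀ i)) p) :=
        hprodgen (fun p : (U × X) × Y => V p.1 p.2) y hy
      rw [hWp, hVp, hexp, ← Finset.prod_mul_distrib]
      refine Finset.prod_congr rfl fun p hp => ?_
      rw [← mul_pow]
      congr 1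
      rw [mul_comm, div_mul_cancel₀ _ (hVposS p hp).ne']
    -- real-valued bound on the fiber sum
    have hVprod_nonneg : ∀ y : Fin n → Y, 0 ≤ ∏ i, V (z i) (y i) :=
      fun y => Finset.prod_nonneg fun i _ => hVnn _ _
    have hreal : ∑ y ∈ F, Wn W_Y x y * ind (empMI z y ≤ R) ≤ Real.exp (-(n : ℝ) * Dr) := by
      have h1 : ∀ y ∈ F, Wn W_Y x y * ind (empMI z y ≤ R)
          ≤ (∏ i, V (z i) (y i)) * Real.exp (-(n : ℝ) * Dr) := by
        intro y hy
        calc Wn W_Y x y * ind (empMI z y ≤ R) ≤ Wn W_Y x y * 1 :=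
              mul_le_mul_of_nonneg_left (ind_le_one _) (hWnn y)
          _ = Wn W_Y x y := mul_one _
          _ = _ := hkeyEq y hy
      calc ∑ y ∈ F, Wn W_Y x y * ind (empMI z y ≤ R)
          ≤ ∑ y ∈ F, (∏ i, V (z i) (y i)) * Real.exp (-(n : ℝ) * Dr) :=
            Finset.sum_le_sum h1
        _ ≤ ∑ y : Fin n → Y, (∏ i, V (z i) (y i)) * Real.exp (-(n : ℝ) * Dr) :=
            Finset.sum_le_sum_of_subset_of_nonneg (Finset.subset_univ F)
              (fun y _ _ => mul_nonneg (hVprod_nonneg y) (Real.exp_nonneg _))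
        _ = (∑ y : Fin n → Y, ∏ i, V (z i) (y i)) * Real.exp (-(n : ℝ) * Dr) :=
            (Finset.sum_mul _ _ _).symm
        _ = Real.exp (-(n : ℝ) * Dr) := by rw [chansum V hVch z, one_mul]
    calc ∑ y ∈ F, ENNReal.ofReal (Wn W_Y x y * ind (empMI z y ≤ R))
        = ENNReal.ofReal (∑ y ∈ F, Wn W_Y x y * ind (empMI z y ≤ R)) :=
          (ENNReal.ofReal_sum_of_nonneg
            (fun y _ => mul_nonneg (hWnn y) (ind_nonneg _))).symm
      _ ≤ ENNReal.ofReal (Real.exp (-(n : ℝ) * Dr)) := ENNReal.ofReal_le_ofReal hreal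
      _ = EReal.exp (((-(n : ℝ) * Dr : ℝ) : EReal)) := (EReal.exp_coe _).symm
      _ = EReal.exp ((-(n : ℝ) : EReal) * (Dr : EReal)) := by
          rw [EReal.coe_mul, EReal.coe_neg]
      _ ≤ EReal.exp ((-(n : ℝ) : EReal) * Esp P W_Y R) :=
          EReal.exp_monotone (auxD n _ _ hEsp)

end AuxProof

theorem stmt8 (U X Y : Type) [Fintype U] [Fintype X] [Fintype Y]
    [DecidableEq U] [DecidableEq X] [DecidableEq Y] :
    ∃ c : ℕ, ∀ n : ℕ, 0 < n →
      ∀ W_Y : X → Y → ℝ, IsChannel W_Y →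
      ∀ P : U × X → ℝ, IsDist P → IsTypeDen n P →
      ∀ (u : Fin n → U) (x : Fin n → X), empDist (fun i => (u i, x i)) = P →
      ∀ R : ℝ, 0 ≤ R →
        ENNReal.ofReal (∑ y : Fin n → Y, Wn W_Y x y * ind (empMI (fun i => (u i, x i)) y ≤ R))
          ≤ (n + 1 : ℝ≥0∞) ^ c * EReal.exp ((-(n : ℝ) : EReal) * Esp P W_Y R) := by
  classical
  refine ⟨Fintype.card U * Fintype.card X * Fintype.card Y, ?_⟩
  intro n hn W_Y hW P hP _hden u x hux R hR
  rcases isEmpty_or_nonempty Y with hY | hY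
  · haveI : IsEmpty (Fin n → Y) := ⟨fun f => IsEmpty.false (f ⟨0, hn⟩)⟩
    rw [Finset.univ_eq_empty, Finset.sum_empty, ENNReal.ofReal_zero]
    exact zero_le
  obtain ⟨ys⟩ := hY
  set B : ℝ≥0∞ := EReal.exp ((-(n : ℝ) : EReal) * Esp P W_Y R) with hB
  set f : (Fin n → Y) → ℝ :=
    fun y => Wn W_Y x y * ind (empMI (fun i => (u i, x i)) y ≤ R) with hf
  have hfnn : ∀ y, 0 ≤ f y :=
    fun y => mul_nonneg (Finset.prod_nonneg fun i _ => hW.1 _ _) (ind_nonneg _)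
  set cntF : (Fin n → Y) → ((U × X) × Y) → Fin (n + 1) :=
    fun y p => ⟨jct (fun i => ((u i, x i), y i)) p,
      Nat.lt_succ_of_le (jct_le _ _)⟩ with hcntF
  have key : ∀ N : ((U × X) × Y) → Fin (n + 1),
      ∑ y ∈ Finset.univ.filter (fun y => cntF y = N), ENNReal.ofReal (f y) ≤ B := by
    intro N
    by_cases hex : ∃ y₀, cntF y₀ = N ∧ empMI (fun i => (u i, x i)) y₀ ≤ R
    · obtain ⟨y₀, hN, hR₀⟩ := hex
      refine fiberBound hn W_Y hW P hP (fun i => (u i, x i)) x (fun i => rfl) hux R ys y₀ hR₀ _ ?_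
      intro y hy p
      have h1 : cntF y = cntF y₀ := ((Finset.mem_filter.1 hy).2).trans hN.symm
      exact congrArg Fin.val (congrFun h1 p)
    · rw [Finset.sum_eq_zero]
      · exact zero_le
      intro y hy
      have hnot : ¬ empMI (fun i => (u i, x i)) y ≤ R :=
        fun hle => hex ⟨y, (Finset.mem_filter.1 hy).2, hle⟩
      have : f y = 0 := by simp [hf, ind, hnot]
      rw [this, ENNReal.ofReal_zero]
  calc ENNReal.ofReal (∑ y : Fin n → Y, f y)
      = ∑ y : Fin n → Y, ENNReal.ofReal (f y) :=
        ENNReal.ofReal_sum_of_nonneg (fun y _ => hfnn y)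
    _ = ∑ N : ((U × X) × Y) → Fin (n + 1),
          ∑ y ∈ Finset.univ.filter (fun y => cntF y = N), ENNReal.ofReal (f y) :=
        (Finset.sum_fiberwise Finset.univ cntF _).symm
    _ ≤ ∑ _N : ((U × X) × Y) → Fin (n + 1), B := Finset.sum_le_sum fun N _ => key N
    _ = (Fintype.card (((U × X) × Y) → Fin (n + 1))) • B := by
        rw [Finset.sum_const, Finset.card_univ]
    _ = ((n + 1) ^ (Fintype.card U * Fintype.card X * Fintype.card Y) : ℕ) • B := by
        rw [Fintype.card_fun, Fintype.card_fin, Fintype.card_prod, Fintype.card_prod]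
    _ = (n + 1 : ℝ≥0∞) ^ (Fintype.card U * Fintype.card X * Fintype.card Y) * B := by
        rw [nsmul_eq_mul]
        push_cast
        ring
end

section
/- For every λ ≥ 1 and rates satisfying R̃1 ≥ R1 ≥ 0 and R̃2 ≥ R2 ≥ 0, the undetected-error exponent for message 1 is at least the total-error exponent for message 1: E⁻_{r,λ}(R1, R2, R2) + ((R̃1 + R̃2) − (R1 + R2)) ≥ E⁻_{r,1/λ}(R̃1, R̃2, R2). -/
open scoped BigOperators ENNReal

theorem stmt11 (U X Y : Type) [Fintype U] [Fintype X] [Fintype Y]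
    (W_Y : X → Y → ℝ) (hW : IsChannel W_Y)
    (P : U × X → ℝ) (hP : IsDist P)
    (lam R1 R2 Rt1 Rt2 : ℝ) (hlam : 1 ≤ lam)
    (hR1 : 0 ≤ R1) (hR2 : 0 ≤ R2) (hRt1 : R1 ≤ Rt1) (hRt2 : R2 ≤ Rt2) :
    Epen P W_Y lam R1 R2 R2 + (((Rt1 + Rt2) - (R1 + R2) : ℝ) : EReal)
      ≥ Epen P W_Y (1 / lam) Rt1 Rt2 R2 := by
  have h0 : (0 : ℝ) < lam := lt_of_lt_of_le one_pos hlam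
  set c : ℝ := (Rt1 + Rt2) - (R1 + R2) with hc
  have hcnn : 0 ≤ c := by simp only [hc]; linarith
  -- key pointwise inequality
  have key : ∀ V : {V : U × X → Y → ℝ // IsChannel V},
      (condKL P V.1 (Wuxy W_Y)
        + ((1 / lam * max (chMI P V.1 - (Rt1 + Rt2)) 0 - max (IUY P V.1 - R2) 0 : ℝ) : EReal))
      ≤ (condKL P V.1 (Wuxy W_Y)
        + ((lam * max (chMI P V.1 - (R1 + R2)) 0 - max (IUY P V.1 - R2) 0 : ℝ) : EReal))
        + (c : EReal) := by
    intro V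
    rw [add_assoc, ← EReal.coe_add]
    apply add_le_add le_rfl
    rw [EReal.coe_le_coe_iff]
    set I := chMI P V.1
    have m1 : max (I - (Rt1 + Rt2)) 0 ≤ max (I - (R1 + R2)) 0 :=
      max_le_max (by linarith) le_rfl
    have m2 : 1 / lam * max (I - (Rt1 + Rt2)) 0 ≤ max (I - (Rt1 + Rt2)) 0 :=
      mul_le_of_le_one_left (le_max_right _ _) ((div_le_one h0).2 hlam)
    have m3 : max (I - (R1 + R2)) 0 ≤ lam * max (I - (R1 + R2)) 0 :=
      le_mul_of_one_le_left (le_max_right _ _) hlam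
    linarith
  rw [ge_iff_le]
  unfold Epen
  rw [← EReal.sub_le_iff_le_add (by exact Or.inl (EReal.coe_ne_bot c))
      (by exact Or.inl (EReal.coe_ne_top c))]
  apply le_iInf
  intro V
  rw [EReal.sub_le_iff_le_add (by exact Or.inl (EReal.coe_ne_bot c))
      (by exact Or.inl (EReal.coe_ne_top c))]
  exact le_trans (iInf_le _ V) (key V)
end

section
/- For every λ ≥ 1 and rates satisfying R̃2 ≥ R2 ≥ 0, the marginal modified random coding exponents satisfy E_{r,λ}(R2) + (R̃2 − R2) ≥ E_{r,1/λ}(R̃2). -/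
open scoped BigOperators ENNReal

theorem stmt12 (U X Y : Type) [Fintype U] [Fintype X] [Fintype Y]
    (W_Y : X → Y → ℝ) (hW : IsChannel W_Y)
    (P : U × X → ℝ) (hP : IsDist P)
    (lam R2 Rt2 : ℝ) (hlam : 1 ≤ lam) (hR2 : 0 ≤ R2) (hRt2 : R2 ≤ Rt2) :
    Emarg P W_Y lam R2 + ((Rt2 - R2 : ℝ) : EReal) ≥ Emarg P W_Y (1 / lam) Rt2 := by
  have hlam0 : (0:ℝ) < lam := lt_of_lt_of_le one_pos hlam
  have hc : (0:ℝ) ≤ Rt2 - R2 := by linarith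
  rw [ge_iff_le, ← EReal.sub_le_iff_le_add (Or.inl (EReal.coe_ne_bot _))
      (Or.inl (EReal.coe_ne_top _))]
  unfold Emarg
  refine le_iInf fun V => ?_
  refine EReal.sub_le_of_le_add ?_
  refine iInf_le_of_le V ?_
  have key : 1 / lam * max (chMI (PU P) V.1 - Rt2) 0
      ≤ lam * max (chMI (PU P) V.1 - R2) 0 + (Rt2 - R2) := by
    set I := chMI (PU P) V.1 with hI
    have hinv : 1 / lam ≤ 1 := by
      rw [div_le_one hlam0]; linarith
    have hinv0 : 0 ≤ 1 / lam := by positivity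
    rcases le_or_gt I Rt2 with h | h
    · rw [max_eq_right (by linarith)]
      have h2 : 0 ≤ max (I - R2) 0 := le_max_right _ _
      nlinarith
    · rw [max_eq_left (by linarith), max_eq_left (by linarith)]
      nlinarith
  calc condKL (PU P) V.1 (WYU P W_Y)
        + ((1 / lam * max (chMI (PU P) V.1 - Rt2) 0 : ℝ) : EReal)
      ≤ condKL (PU P) V.1 (WYU P W_Y)
        + ((lam * max (chMI (PU P) V.1 - R2) 0 + (Rt2 - R2) : ℝ) : EReal) := by
        exact add_le_add le_rfl (EReal.coe_le_coe_iff.mpr key)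
    _ = condKL (PU P) V.1 (WYU P W_Y)
        + ((lam * max (chMI (PU P) V.1 - R2) 0 : ℝ) : EReal) + ((Rt2 - R2 : ℝ) : EReal) := by
        rw [EReal.coe_add, add_assoc]
end
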